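/- arXiv:math/0604006 — 3 statements merged into one kernel-verified Lean document; each statement's English description precedes it below -/
import Mathlib

section
/- Let λ ∈ ℝ. If φ(1,λ) = 0 (λ is a Dirichlet eigenvalue) or ϑ′(1,λ) = 0 (λ is a Neumann eigenvalue), then Δ₀(λ) = 2·Δ(λ)² − 1, and this value is real and satisfies Δ₀(λ) ≥ 1. If in addition Δ(λ)² = 1, then Δ₀(λ) = 1. -/
open MeasureTheory Set

noncomputable section


/-- `(y, y′)` is a solution of `−y″ + q·y = λ·y` on `[0,1]`,
in the integral-equation sense. -/
def IsSol (q : ℝ → ℝ) (lam : ℂ) (y y' : ℝ → ℂ) : Prop :=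
  (∀ x ∈ Set.Icc (0:ℝ) 1, y x = y 0 + ∫ t in (0:ℝ)..x, y' t) ∧
  (∀ x ∈ Set.Icc (0:ℝ) 1, y' x = y' 0 + ∫ t in (0:ℝ)..x, ((q t : ℂ) - lam) * y t)

lemma key_fubini (u v : ℝ → ℂ) (hu : IntegrableOn u (Ioc (0:ℝ) 1))
    (hv : IntegrableOn v (Ioc (0:ℝ) 1)) :
    (∫ t in Ioc (0:ℝ) 1, u t * (∫ s in Ioc (0:ℝ) t, v s)) +
      (∫ t in Ioc (0:ℝ) 1, (∫ s in Ioc (0:ℝ) t, u s) * v t) =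
      (∫ t in Ioc (0:ℝ) 1, u t) * (∫ t in Ioc (0:ℝ) 1, v t) := by
  set μ := volume.restrict (Ioc (0:ℝ) 1) with hμ
  have hF : Integrable (fun z : ℝ × ℝ => u z.1 * v z.2) (μ.prod μ) :=
    hu.mul_prod hv
  have hsle : MeasurableSet {z : ℝ × ℝ | z.1 ≤ z.2} :=
    measurableSet_le measurable_fst measurable_snd
  have hslt : MeasurableSet {z : ℝ × ℝ | z.2 < z.1} :=
    measurableSet_lt measurable_snd measurable_fst
  set G1 : ℝ × ℝ → ℂ := ({z : ℝ × ℝ | z.2 < z.1}).indicator (fun z => u z.1 * v z.2) with hG1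
  set G2 : ℝ × ℝ → ℂ := ({z : ℝ × ℝ | z.1 ≤ z.2}).indicator (fun z => u z.1 * v z.2) with hG2
  have hG1i : Integrable G1 (μ.prod μ) := hF.indicator hslt
  have hG2i : Integrable G2 (μ.prod μ) := hF.indicator hsle
  have hsum : ∀ z : ℝ × ℝ, G1 z + G2 z = u z.1 * v z.2 := by
    intro z
    by_cases h : z.1 ≤ z.2 <;>
      simp [hG1, hG2, Set.indicator_apply, h, not_le.mpr, not_lt.mpr, lt_of_not_ge]
  -- first: ∫ G1 = ∫ t, u t * (∫ s in Ioc 0 t, v s)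
  have e1 : ∫ z, G1 z ∂(μ.prod μ) = ∫ t in Ioc (0:ℝ) 1, u t * (∫ s in Ioc (0:ℝ) t, v s) := by
    rw [MeasureTheory.integral_prod _ hG1i]
    refine setIntegral_congr_ae measurableSet_Ioc ?_
    refine Filter.Eventually.of_forall fun x hx => ?_
    have : ∀ y : ℝ, G1 (x, y) = (Iio x).indicator (fun y => u x * v y) y := by
      intro y; by_cases h : y < x <;> simp [hG1, Set.indicator_apply, h]
    simp_rw [this]
    rw [MeasureTheory.integral_indicator measurableSet_Iio]
    rw [hμ, Measure.restrict_restrict measurableSet_Iio]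
    have : Iio x ∩ Ioc (0:ℝ) 1 = Ioo 0 x := by
      ext y; constructor
      · rintro ⟨h1, h2, h3⟩; exact ⟨h2, h1⟩
      · rintro ⟨h1, h2⟩; exact ⟨h2, h1, le_trans h2.le hx.2⟩
    rw [this, ← integral_Ioc_eq_integral_Ioo, integral_const_mul]
  have e2 : ∫ z, G2 z ∂(μ.prod μ) = ∫ t in Ioc (0:ℝ) 1, (∫ s in Ioc (0:ℝ) t, u s) * v t := by
    rw [MeasureTheory.integral_prod_symm _ hG2i]
    refine setIntegral_congr_ae measurableSet_Ioc ?_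
    refine Filter.Eventually.of_forall fun y hy => ?_
    have : ∀ x : ℝ, G2 (x, y) = (Iic y).indicator (fun x => u x * v y) x := by
      intro x; by_cases h : x ≤ y <;> simp [hG2, Set.indicator_apply, h]
    simp_rw [this]
    rw [MeasureTheory.integral_indicator measurableSet_Iic]
    rw [hμ, Measure.restrict_restrict measurableSet_Iic]
    have : Iic y ∩ Ioc (0:ℝ) 1 = Ioc 0 y := by
      ext x; constructor
      · rintro ⟨h1, h2, h3⟩; exact ⟨h2, h1⟩
      · rintro ⟨h1, h2⟩; exact ⟨h2, h1, le_trans h2 hy.2⟩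
    rw [this, integral_mul_const]
  have e3 : ∫ z, (u z.1 * v z.2) ∂(μ.prod μ) =
      (∫ t in Ioc (0:ℝ) 1, u t) * (∫ t in Ioc (0:ℝ) 1, v t) :=
    integral_prod_mul u v
  calc (∫ t in Ioc (0:ℝ) 1, u t * (∫ s in Ioc (0:ℝ) t, v s)) +
      (∫ t in Ioc (0:ℝ) 1, (∫ s in Ioc (0:ℝ) t, u s) * v t)
      = ∫ z, (G1 z + G2 z) ∂(μ.prod μ) := by
        rw [integral_add hG1i hG2i, e1, e2]
    _ = (∫ t in Ioc (0:ℝ) 1, u t) * (∫ t in Ioc (0:ℝ) 1, v t) := by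
        rw [← e3]; exact integral_congr_ae (Filter.Eventually.of_forall hsum)


lemma parts (f p u v : ℝ → ℂ)
    (hfc : ContinuousOn f (Icc (0:ℝ) 1)) (hpc : ContinuousOn p (Icc (0:ℝ) 1))
    (hu : IntegrableOn u (Ioc (0:ℝ) 1)) (hv : IntegrableOn v (Ioc (0:ℝ) 1))
    (hf : ∀ x ∈ Icc (0:ℝ) 1, f x = f 0 + ∫ t in (0:ℝ)..x, u t)
    (hp : ∀ x ∈ Icc (0:ℝ) 1, p x = p 0 + ∫ t in (0:ℝ)..x, v t) :
    f 1 * p 1 - f 0 * p 0 =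
      (∫ t in Ioc (0:ℝ) 1, f t * v t) + (∫ t in Ioc (0:ℝ) 1, u t * p t) := by
  have h01 : (0:ℝ) ≤ 1 := zero_le_one
  -- bounds for f and p
  obtain ⟨Cf, hCf⟩ := (isCompact_Icc (a := (0:ℝ)) (b := 1)).exists_bound_of_continuousOn hfc
  obtain ⟨Cp, hCp⟩ := (isCompact_Icc (a := (0:ℝ)) (b := 1)).exists_bound_of_continuousOn hpc
  have hfm : AEStronglyMeasurable f (volume.restrict (Ioc (0:ℝ) 1)) :=
    (hfc.aestronglyMeasurable measurableSet_Icc).mono_measure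
      (Measure.restrict_mono Ioc_subset_Icc_self le_rfl)
  have hpm : AEStronglyMeasurable p (volume.restrict (Ioc (0:ℝ) 1)) :=
    (hpc.aestronglyMeasurable measurableSet_Icc).mono_measure
      (Measure.restrict_mono Ioc_subset_Icc_self le_rfl)
  have hfv : IntegrableOn (fun t => f t * v t) (Ioc (0:ℝ) 1) := by
    refine hv.bdd_mul (c := Cf) hfm ?_
    filter_upwards [ae_restrict_mem measurableSet_Ioc] with t ht
    exact hCf t (Ioc_subset_Icc_self ht)
  have hup : IntegrableOn (fun t => u t * p t) (Ioc (0:ℝ) 1) := by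
    have : IntegrableOn (fun t => p t * u t) (Ioc (0:ℝ) 1) := by
      refine hu.bdd_mul (c := Cp) hpm ?_
      filter_upwards [ae_restrict_mem measurableSet_Ioc] with t ht
      exact hCp t (Ioc_subset_Icc_self ht)
    exact this.congr_fun (fun t _ => mul_comm _ _) measurableSet_Ioc
  set U := ∫ t in Ioc (0:ℝ) 1, u t with hU
  set V := ∫ t in Ioc (0:ℝ) 1, v t with hV
  have hints : ∀ x ∈ Icc (0:ℝ) 1, (∫ t in (0:ℝ)..x, u t) = ∫ t in Ioc (0:ℝ) x, u t := by
    intro x hx; rw [intervalIntegral.integral_of_le hx.1]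
  have hintv : ∀ x ∈ Icc (0:ℝ) 1, (∫ t in (0:ℝ)..x, v t) = ∫ t in Ioc (0:ℝ) x, v t := by
    intro x hx; rw [intervalIntegral.integral_of_le hx.1]
  have hf1 : f 1 = f 0 + U := by
    rw [hf 1 (right_mem_Icc.mpr h01), hints 1 (right_mem_Icc.mpr h01)]
  have hp1 : p 1 = p 0 + V := by
    rw [hp 1 (right_mem_Icc.mpr h01), hintv 1 (right_mem_Icc.mpr h01)]
  -- ∫ f v = f 0 * V + ∫ Pu v
  have efv : ∫ t in Ioc (0:ℝ) 1, f t * v t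
      = f 0 * V + ∫ t in Ioc (0:ℝ) 1, (∫ s in Ioc (0:ℝ) t, u s) * v t := by
    have hcongr : ∀ t ∈ Ioc (0:ℝ) 1,
        f t * v t = f 0 * v t + (∫ s in Ioc (0:ℝ) t, u s) * v t := by
      intro t ht
      have htIcc : t ∈ Icc (0:ℝ) 1 := Ioc_subset_Icc_self ht
      rw [hf t htIcc, hints t htIcc]; ring
    rw [setIntegral_congr_ae measurableSet_Ioc (Filter.Eventually.of_forall hcongr)]
    have h1 : IntegrableOn (fun t => f 0 * v t) (Ioc (0:ℝ) 1) := hv.const_mul _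
    have h2 : IntegrableOn (fun t => (∫ s in Ioc (0:ℝ) t, u s) * v t) (Ioc (0:ℝ) 1) := by
      have h3 := hfv.sub h1
      refine h3.congr ?_
      filter_upwards [ae_restrict_mem measurableSet_Ioc] with t ht
      have htIcc : t ∈ Icc (0:ℝ) 1 := Ioc_subset_Icc_self ht
      simp only [Pi.sub_apply]
      rw [hf t htIcc, hints t htIcc]; ring
    rw [integral_add h1 h2, integral_const_mul]
  have eup : ∫ t in Ioc (0:ℝ) 1, u t * p t
      = U * p 0 + ∫ t in Ioc (0:ℝ) 1, u t * (∫ s in Ioc (0:ℝ) t, v s) := by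
    have hcongr : ∀ t ∈ Ioc (0:ℝ) 1,
        u t * p t = u t * p 0 + u t * (∫ s in Ioc (0:ℝ) t, v s) := by
      intro t ht
      have htIcc : t ∈ Icc (0:ℝ) 1 := Ioc_subset_Icc_self ht
      rw [hp t htIcc, hintv t htIcc]; ring
    rw [setIntegral_congr_ae measurableSet_Ioc (Filter.Eventually.of_forall hcongr)]
    have h1 : IntegrableOn (fun t => u t * p 0) (Ioc (0:ℝ) 1) := hu.mul_const _
    have h2 : IntegrableOn (fun t => u t * (∫ s in Ioc (0:ℝ) t, v s)) (Ioc (0:ℝ) 1) := by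
      have h3 := hup.sub h1
      refine h3.congr ?_
      filter_upwards [ae_restrict_mem measurableSet_Ioc] with t ht
      have htIcc : t ∈ Icc (0:ℝ) 1 := Ioc_subset_Icc_self ht
      simp only [Pi.sub_apply]
      rw [hp t htIcc, hintv t htIcc]; ring
    rw [integral_add h1 h2, integral_mul_const]
  have hkey := key_fubini u v hu hv
  rw [efv, eup, hf1, hp1]
  rw [← hU, ← hV] at hkey
  linear_combination -hkey

lemma sup_props (w : ℝ → ℂ) :
    ∃ c ∈ Icc (0:ℝ) 1,
      (∀ x, 0 ≤ x → x < c → IntervalIntegrable w volume 0 x) ∧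
      (∀ x ∈ Icc (0:ℝ) 1, c < x → ¬ IntervalIntegrable w volume 0 x) := by
  set A : Set ℝ := {b | b ∈ Icc (0:ℝ) 1 ∧ IntervalIntegrable w volume 0 b} with hA
  have h0A : (0:ℝ) ∈ A := ⟨⟨le_refl _, zero_le_one⟩, IntervalIntegrable.refl⟩
  have hbdd : BddAbove A := ⟨1, fun b hb => hb.1.2⟩
  refine ⟨sSup A, ⟨le_csSup hbdd h0A, csSup_le ⟨0, h0A⟩ fun b hb => hb.1.2⟩, ?_, ?_⟩
  · intro x hx0 hxc
    obtain ⟨b, hb, hxb⟩ := exists_lt_of_lt_csSup ⟨0, h0A⟩ hxc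
    refine hb.2.mono_set ?_
    rw [uIcc_of_le hx0, uIcc_of_le (le_trans hx0 hxb.le)]
    exact Icc_subset_Icc le_rfl hxb.le
  · intro x hx hcx hint
    exact absurd (le_csSup hbdd ⟨hx, hint⟩) (not_le.mpr hcx)

lemma regular (q : ℝ → ℝ) (hq : MemLp q 2 (volume.restrict (Set.Icc (0:ℝ) 1)))
    (lam : ℂ) (y y' : ℝ → ℂ) (h : IsSol q lam y y') :
    ContinuousOn y (Icc (0:ℝ) 1) ∧ ContinuousOn y' (Icc (0:ℝ) 1) ∧
    IntegrableOn y' (Ioc (0:ℝ) 1) ∧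
    IntegrableOn (fun t => ((q t : ℂ) - lam) * y t) (Ioc (0:ℝ) 1) := by
  have h01 : (0:ℝ) ≤ 1 := zero_le_one
  haveI : IsFiniteMeasure (volume.restrict (Icc (0:ℝ) 1)) :=
    ⟨by rw [Measure.restrict_apply_univ]; simp⟩
  have hqi : Integrable q (volume.restrict (Icc (0:ℝ) 1)) :=
    hq.integrable (by norm_num)
  set k : ℝ → ℂ := fun t => (q t : ℂ) - lam with hkdef
  have hk : IntegrableOn k (Icc (0:ℝ) 1) := by
    exact (hqi.ofReal).sub (integrableOn_const (by simp))
  set g : ℝ → ℂ := fun t => ((q t : ℂ) - lam) * y t with hgdef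
  obtain ⟨c, hc, hcI, hcN⟩ := sup_props y'
  obtain ⟨d, hd, hdI, hdN⟩ := sup_props g
  -- junk values
  have hjy : ∀ x ∈ Icc (0:ℝ) 1, c < x → y x = y 0 := by
    intro x hx hcx
    rw [h.1 x hx, intervalIntegral.integral_undef (hcN x hx hcx), add_zero]
  have hjy' : ∀ x ∈ Icc (0:ℝ) 1, d < x → y' x = y' 0 := by
    intro x hx hdx
    rw [h.2 x hx, intervalIntegral.integral_undef (hdN x hx hdx), add_zero]
  -- continuity on initial segments
  have hprim : ∀ (w W : ℝ → ℂ) (e : ℝ), e ∈ Icc (0:ℝ) 1 →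
      (∀ x, 0 ≤ x → x < e → IntervalIntegrable w volume 0 x) →
      (∀ x ∈ Icc (0:ℝ) 1, W x = W 0 + ∫ t in (0:ℝ)..x, w t) →
      ContinuousOn W (Ico 0 e) := by
    intro w W e he heI hW
    intro x hx
    set b := (x + e) / 2 with hb
    have hxb : x < b := by simp only [hb]; linarith [hx.2]
    have hbe : b < e := by simp only [hb]; linarith [hx.2]
    have hb0 : 0 ≤ b := le_trans hx.1 hxb.le
    have hbint : IntervalIntegrable w volume 0 b := heI b hb0 hbe
    have hcont : ContinuousOn W (Icc 0 b) := by
      have hprim : ContinuousOn (fun z => W 0 + ∫ t in (0:ℝ)..z, w t) (Icc 0 b) := by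
        have := intervalIntegral.continuousOn_primitive_interval'
          (a := 0) hbint (by rw [uIcc_of_le hb0]; exact ⟨le_refl _, hb0⟩)
        rw [uIcc_of_le hb0] at this
        exact continuousOn_const.add this
      refine hprim.congr fun z hz => ?_
      exact hW z ⟨hz.1, le_trans hz.2 (le_trans hbe.le he.2)⟩
    have hmem : Icc (0:ℝ) b ∈ nhdsWithin x (Ico 0 e) := by
      refine Filter.mem_of_superset
        (Filter.inter_mem self_mem_nhdsWithin
          (mem_nhdsWithin_of_mem_nhds (Iio_mem_nhds hxb))) ?_
      rintro z ⟨hz1, hz2⟩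
      exact ⟨hz1.1, hz2.le⟩
    exact (hcont.continuousWithinAt ⟨hx.1, hxb.le⟩).mono_of_mem_nhdsWithin hmem
  have ycont : ContinuousOn y (Ico 0 c) := hprim y' y c hc hcI h.1
  have y'cont : ContinuousOn y' (Ico 0 d) := hprim g y' d hd hdI h.2
  -- a bound for ‖y‖ on [0,1] \ {c}
  have hMex : ∃ M : ℝ, ∀ x ∈ Icc (0:ℝ) 1, x ≠ c → ‖y x‖ ≤ M := by
    by_cases hdc : d < c
    · -- easy case: y' is eventually the junk constant
      set b := (d + c) / 2 with hbdef
      have hdb : d < b := by simp only [hbdef]; linarith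
      have hbc : b < c := by simp only [hbdef]; linarith
      have hb0 : 0 ≤ b := le_trans hd.1 hdb.le
      have hbii : IntervalIntegrable y' volume 0 b := hcI b hb0 hbc
      set K := ∫ t in Ioc (0:ℝ) b, ‖y' t‖ with hKdef
      have hK0 : 0 ≤ K := setIntegral_nonneg measurableSet_Ioc fun t _ => norm_nonneg _
      refine ⟨‖y 0‖ + K + ‖y' 0‖, ?_⟩
      intro x hx hne
      rcases lt_trichotomy x c with hxc | hxc | hxc
      · have hxii : IntervalIntegrable y' volume 0 x := hcI x hx.1 hxc
        have hyx : y x = y 0 + ∫ t in (0:ℝ)..x, y' t := h.1 x hx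
        rcases le_or_gt x b with hxb | hxb
        · have h1 : ‖∫ t in (0:ℝ)..x, y' t‖ ≤ ∫ t in (0:ℝ)..x, ‖y' t‖ :=
            intervalIntegral.norm_integral_le_integral_norm hx.1
          have h2 : (∫ t in (0:ℝ)..x, ‖y' t‖) = ∫ t in Ioc (0:ℝ) x, ‖y' t‖ :=
            intervalIntegral.integral_of_le hx.1
          have h3 : (∫ t in Ioc (0:ℝ) x, ‖y' t‖) ≤ K := by
            refine setIntegral_mono_set hbii.1.norm ?_ ?_
            · exact Filter.Eventually.of_forall fun t => norm_nonneg _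
            · exact HasSubset.Subset.eventuallyLE (Ioc_subset_Ioc le_rfl hxb)
          rw [hyx]
          calc ‖y 0 + ∫ t in (0:ℝ)..x, y' t‖ ≤ ‖y 0‖ + ‖∫ t in (0:ℝ)..x, y' t‖ :=
                norm_add_le _ _
            _ ≤ ‖y 0‖ + K := by linarith [h1, h2 ▸ h3, le_trans h1 (h2 ▸ h3)]
            _ ≤ ‖y 0‖ + K + ‖y' 0‖ := by linarith [norm_nonneg (y' 0)]
        · have hbxii : IntervalIntegrable y' volume b x := hxii.mono_set (by
            rw [uIcc_of_le hxb.le, uIcc_of_le hx.1]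
            exact Icc_subset_Icc hb0 le_rfl)
          have hadd : (∫ t in (0:ℝ)..b, y' t) + ∫ t in b..x, y' t = ∫ t in (0:ℝ)..x, y' t :=
            intervalIntegral.integral_add_adjacent_intervals hbii hbxii
          have hconst : (∫ t in b..x, y' t) = (x - b) • y' 0 := by
            rw [intervalIntegral.integral_congr (g := fun _ => y' 0) ?_]
            · exact intervalIntegral.integral_const _
            · intro t ht
              rw [uIcc_of_le hxb.le] at ht
              exact hjy' t ⟨le_trans hb0 ht.1, le_trans ht.2 hx.2⟩ (lt_of_lt_of_le hdb ht.1)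
          have h1 : ‖∫ t in (0:ℝ)..b, y' t‖ ≤ K := by
            rw [hKdef, ← intervalIntegral.integral_of_le hb0]
            exact intervalIntegral.norm_integral_le_integral_norm hb0
          have h2 : ‖∫ t in b..x, y' t‖ ≤ ‖y' 0‖ := by
            rw [hconst, norm_smul, Real.norm_eq_abs, abs_of_nonneg (by linarith)]
            nlinarith [norm_nonneg (y' 0), hx.2, hb0]
          rw [hyx, ← hadd]
          calc ‖y 0 + ((∫ t in (0:ℝ)..b, y' t) + ∫ t in b..x, y' t)‖
              ≤ ‖y 0‖ + ‖∫ t in (0:ℝ)..b, y' t‖ + ‖∫ t in b..x, y' t‖ := by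
                refine le_trans (norm_add_le _ _) ?_
                linarith [norm_add_le (∫ t in (0:ℝ)..b, y' t) (∫ t in b..x, y' t)]
            _ ≤ ‖y 0‖ + K + ‖y' 0‖ := by linarith
      · exact absurd hxc hne
      · rw [hjy x hx hxc]
        linarith [norm_nonneg (y' 0)]
    · -- iteration case : c ≤ d
      push_neg at hdc
      rcases eq_or_lt_of_le hc.1 with hc0 | hc0
      · refine ⟨‖y 0‖, ?_⟩
        intro x hx hne
        have : c < x := lt_of_le_of_ne (hc0 ▸ hx.1) (Ne.symm (hc0 ▸ hne) )
        rw [hjy x hx this]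
      · -- 0 < c
        set m : ℝ → ℝ := fun t => ‖y t‖ + ‖y' t‖ with hmdef
        have hm0 : ∀ t, 0 ≤ m t := fun t => add_nonneg (norm_nonneg _) (norm_nonneg _)
        have hmc : ContinuousOn m (Ico 0 c) :=
          ycont.norm.add ((y'cont.mono (Ico_subset_Ico le_rfl hdc)).norm)
        set H : ℝ → ℝ := fun t => 1 + ‖k t‖ with hHdef
        have hH : IntegrableOn H (Icc (0:ℝ) 1) :=
          (integrableOn_const (by simp)).add hk.norm
        have hH1 : ∀ t, 1 ≤ H t := fun t => le_add_of_nonneg_right (norm_nonneg _)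
        have hH0 : ∀ t, 0 ≤ H t := fun t => le_trans zero_le_one (hH1 t)
        -- choose a < c with small tail
        set G : ℝ → ℝ := fun x => ∫ t in Ioc (0:ℝ) x, H t with hGdef
        have hGcont : ContinuousOn G (Icc (0:ℝ) 1) :=
          intervalIntegral.continuousOn_primitive hH
        have htd : Filter.Tendsto G (nhdsWithin c (Ioo 0 c)) (nhds (G c)) := by
          refine Filter.Tendsto.mono_left (hGcont c hc) ?_
          exact nhdsWithin_mono c (fun z hz => ⟨hz.1.le, le_trans hz.2.le hc.2⟩)
        haveI : Filter.NeBot (nhdsWithin c (Ioo 0 c)) := right_nhdsWithin_Ioo_neBot hc0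
        have hev : ∀ᶠ a in nhdsWithin c (Ioo 0 c), G a > G c - 1/2 :=
          htd.eventually (eventually_gt_nhds (by linarith))
        obtain ⟨a, hGa, ha⟩ := (hev.and self_mem_nhdsWithin).exists
        have ha0 : 0 ≤ a := ha.1.le
        have hac : a < c := ha.2
        have htail : ∫ t in Ioc a c, H t ≤ 1/2 := by
          have hsplit : G c = G a + ∫ t in Ioc a c, H t := by
            rw [hGdef]
            simp only []
            rw [← MeasureTheory.setIntegral_union (Ioc_disjoint_Ioc_of_le le_rfl) measurableSet_Ioc
              (hH.mono_set (fun t ht => ⟨ht.1.le, le_trans ht.2 (le_trans hac.le hc.2)⟩))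
              (hH.mono_set (fun t ht => ⟨le_trans ha0 ht.1.le, le_trans ht.2 hc.2⟩)),
              Ioc_union_Ioc_eq_Ioc ha0 hac.le]
          linarith [hGa]
        -- sup on [0,a]
        obtain ⟨Ms, hMs⟩ := (isCompact_Icc (a := (0:ℝ)) (b := a)).exists_bound_of_continuousOn
          (hmc.mono (fun t ht => ⟨ht.1, lt_of_le_of_lt ht.2 hac⟩))
        -- iteration bound on [a, c)
        have hit : ∀ x ∈ Ico a c, m x ≤ 2 * m a := by
          intro x hx
          rcases eq_or_lt_of_le hx.1 with hax | hax
          · rw [← hax]; linarith [hm0 a]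
          have hsub : Icc a x ⊆ Ico 0 c := fun t ht =>
            ⟨le_trans ha0 ht.1, lt_of_le_of_lt ht.2 hx.2⟩
          obtain ⟨t₀, ht₀mem, ht₀max⟩ := isCompact_Icc.exists_isMaxOn
            ⟨a, left_mem_Icc.mpr hax.le⟩ (hmc.mono hsub)
          have ht₀c : t₀ < c := lt_of_le_of_lt ht₀mem.2 hx.2
          have ht₀0 : 0 ≤ t₀ := le_trans ha0 ht₀mem.1
          have ht₀Icc : t₀ ∈ Icc (0:ℝ) 1 := ⟨ht₀0, le_trans ht₀c.le hc.2⟩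
          have haIcc : a ∈ Icc (0:ℝ) 1 := ⟨ha0, le_trans hac.le hc.2⟩
          -- y t₀ - y a = ∫ a..t₀ y'
          have hyii : IntervalIntegrable y' volume 0 t₀ := hcI t₀ ht₀0 ht₀c
          have hyiia : IntervalIntegrable y' volume 0 a := hcI a ha0 hac
          have hgii : IntervalIntegrable g volume 0 t₀ := hdI t₀ ht₀0 (lt_of_lt_of_le ht₀c hdc)
          have hgiia : IntervalIntegrable g volume 0 a := hdI a ha0 (lt_of_lt_of_le hac hdc)
          have hy : y t₀ - y a = ∫ t in a..t₀, y' t := by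
            rw [h.1 t₀ ht₀Icc, h.1 a haIcc]
            rw [add_sub_add_left_eq_sub]
            exact intervalIntegral.integral_interval_sub_left hyii hyiia
          have hy' : y' t₀ - y' a = ∫ t in a..t₀, g t := by
            rw [h.2 t₀ ht₀Icc, h.2 a haIcc]
            rw [add_sub_add_left_eq_sub]
            exact intervalIntegral.integral_interval_sub_left hgii hgiia
          have hyiiat : IntervalIntegrable y' volume a t₀ := hyii.mono_set (by
            rw [uIcc_of_le ht₀mem.1, uIcc_of_le ht₀0]; exact Icc_subset_Icc ha0 le_rfl)
          have hgiiat : IntervalIntegrable g volume a t₀ := hgii.mono_set (by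
            rw [uIcc_of_le ht₀mem.1, uIcc_of_le ht₀0]; exact Icc_subset_Icc ha0 le_rfl)
          have hest : m t₀ ≤ m a + ∫ t in Ioc a t₀, (‖y' t‖ + ‖g t‖) := by
            have e1 : ‖y t₀‖ ≤ ‖y a‖ + ∫ t in Ioc a t₀, ‖y' t‖ := by
              have : ‖y t₀ - y a‖ ≤ ∫ t in Ioc a t₀, ‖y' t‖ := by
                rw [hy, ← intervalIntegral.integral_of_le ht₀mem.1]
                exact intervalIntegral.norm_integral_le_integral_norm ht₀mem.1
              calc ‖y t₀‖ ≤ ‖y a‖ + ‖y t₀ - y a‖ := by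
                    simpa using norm_add_le (y a) (y t₀ - y a)
                _ ≤ _ := by linarith
            have e2 : ‖y' t₀‖ ≤ ‖y' a‖ + ∫ t in Ioc a t₀, ‖g t‖ := by
              have : ‖y' t₀ - y' a‖ ≤ ∫ t in Ioc a t₀, ‖g t‖ := by
                rw [hy', ← intervalIntegral.integral_of_le ht₀mem.1]
                exact intervalIntegral.norm_integral_le_integral_norm ht₀mem.1
              calc ‖y' t₀‖ ≤ ‖y' a‖ + ‖y' t₀ - y' a‖ := by
                    simpa using norm_add_le (y' a) (y' t₀ - y' a)
                _ ≤ _ := by linarith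
            have e3 : (∫ t in Ioc a t₀, ‖y' t‖) + (∫ t in Ioc a t₀, ‖g t‖)
                = ∫ t in Ioc a t₀, (‖y' t‖ + ‖g t‖) := by
              rw [← integral_add]
              · exact (intervalIntegrable_iff_integrableOn_Ioc_of_le ht₀mem.1).mp hyiiat.norm
              · exact (intervalIntegrable_iff_integrableOn_Ioc_of_le ht₀mem.1).mp hgiiat.norm
            simp only [hmdef]
            linarith [e1, e2, e3 ▸ le_refl ((∫ t in Ioc a t₀, ‖y' t‖) + ∫ t in Ioc a t₀, ‖g t‖)]
          have hptw : ∫ t in Ioc a t₀, (‖y' t‖ + ‖g t‖) ≤ ∫ t in Ioc a t₀, H t * m t₀ := by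
            refine setIntegral_mono_on ?_ ?_ measurableSet_Ioc ?_
            · exact ((intervalIntegrable_iff_integrableOn_Ioc_of_le ht₀mem.1).mp hyiiat.norm).add
                ((intervalIntegrable_iff_integrableOn_Ioc_of_le ht₀mem.1).mp hgiiat.norm)
            · exact (hH.mono_set (fun t ht => ⟨le_trans ha0 ht.1.le,
                le_trans ht.2 (le_trans ht₀c.le hc.2)⟩)).mul_const _
            · intro t ht
              have htmem : t ∈ Icc a x := ⟨ht.1.le, le_trans ht.2 ht₀mem.2⟩
              have hmt : m t ≤ m t₀ := ht₀max htmem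
              have hgt : ‖g t‖ ≤ ‖k t‖ * m t := by
                have : ‖g t‖ = ‖k t‖ * ‖y t‖ := norm_mul _ _
                rw [this]
                refine mul_le_mul_of_nonneg_left ?_ (norm_nonneg _)
                simp only [hmdef]; linarith [norm_nonneg (y' t)]
              have hy't : ‖y' t‖ ≤ m t := by simp only [hmdef]; linarith [norm_nonneg (y t)]
              calc ‖y' t‖ + ‖g t‖ ≤ m t + ‖k t‖ * m t := by linarith
                _ = (1 + ‖k t‖) * m t := by ring
                _ ≤ (1 + ‖k t‖) * m t₀ := mul_le_mul_of_nonneg_left hmt (hH0 t)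
                _ = H t * m t₀ := rfl
          have hhalf : ∫ t in Ioc a t₀, H t * m t₀ ≤ (1/2) * m t₀ := by
            rw [integral_mul_const]
            refine mul_le_mul_of_nonneg_right ?_ (hm0 t₀)
            refine le_trans ?_ htail
            refine setIntegral_mono_set
              (hH.mono_set (fun t ht => ⟨le_trans ha0 ht.1.le, le_trans ht.2 hc.2⟩)) ?_ ?_
            · exact Filter.Eventually.of_forall fun t => hH0 t
            · exact HasSubset.Subset.eventuallyLE (Ioc_subset_Ioc le_rfl ht₀c.le)
          have h7 : (∫ t in Ioc a t₀, (‖y' t‖ + ‖g t‖)) ≤ 1/2 * m t₀ := le_trans hptw hhalf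
          have h8 : m t₀ ≤ m a + 1/2 * m t₀ := le_trans hest (by linarith)
          have hmt₀ : m t₀ ≤ 2 * m a := by
            have hh := h8
            simp only [hmdef] at hh ⊢
            linarith
          exact le_trans (ht₀max (right_mem_Icc.mpr hax.le)) hmt₀
        refine ⟨max Ms (max (2 * m a) ‖y 0‖), ?_⟩
        intro x hx hne
        rcases lt_trichotomy x c with hxc | hxc | hxc
        · rcases le_or_gt x a with hxa | hxa
          · have := hMs x ⟨hx.1, hxa⟩
            have h2 : ‖y x‖ ≤ m x := by simp only [hmdef]; linarith [norm_nonneg (y' x)]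
            have h3 : m x ≤ Ms := le_trans (le_abs_self _) (by simpa [Real.norm_eq_abs] using this)
            exact le_trans h2 (le_trans h3 (le_max_left _ _))
          · have := hit x ⟨hxa.le, hxc⟩
            have h2 : ‖y x‖ ≤ m x := by simp only [hmdef]; linarith [norm_nonneg (y' x)]
            exact le_trans h2 (le_trans this (le_trans (le_max_left _ _) (le_max_right _ _)))
        · exact absurd hxc hne
        · rw [hjy x hx hxc]
          exact le_trans (le_max_right _ _) (le_max_right _ _)
  obtain ⟨M, hM⟩ := hMex
  have hne_ae : ∀ᵐ t ∂(volume.restrict (Ioc (0:ℝ) 1)), t ≠ c := by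
    refine ae_restrict_of_ae ?_
    rw [ae_iff]
    have hset : {t : ℝ | ¬ t ≠ c} = {c} := by ext t; simp
    rw [hset]
    exact measure_singleton c
  have hymeas : AEStronglyMeasurable y (volume.restrict (Ioc (0:ℝ) 1)) := by
    have h1 : AEMeasurable y (volume.restrict (Ioo (0:ℝ) c)) :=
      (ycont.mono Ioo_subset_Ico_self).aemeasurable measurableSet_Ioo
    have h2 : AEMeasurable y (volume.restrict {c}) := by
      rw [Measure.restrict_eq_zero.mpr (measure_singleton c)]
      exact aemeasurable_zero_measure
    have h3 : AEMeasurable y (volume.restrict (Ioc c 1)) := by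
      refine (aemeasurable_const (b := y 0)).congr ?_
      filter_upwards [ae_restrict_mem measurableSet_Ioc] with t ht
      exact (hjy t ⟨le_trans hc.1 ht.1.le, ht.2⟩ ht.1).symm
    have hsub : Ioc (0:ℝ) 1 ⊆ (Ioo 0 c ∪ {c}) ∪ Ioc c 1 := by
      intro t ht
      rcases lt_trichotomy t c with htc | htc | htc
      · exact Or.inl (Or.inl ⟨ht.1, htc⟩)
      · exact Or.inl (Or.inr (by simp [htc]))
      · exact Or.inr ⟨htc, ht.2⟩
    have hcomb : AEMeasurable y (volume.restrict ((Ioo (0:ℝ) c ∪ {c}) ∪ Ioc c 1)) := by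
      rw [aemeasurable_union_iff, aemeasurable_union_iff]
      exact ⟨⟨h1, h2⟩, h3⟩
    exact (hcomb.mono_measure (Measure.restrict_mono hsub le_rfl)).aestronglyMeasurable
  have hybd_ae : ∀ᵐ t ∂(volume.restrict (Ioc (0:ℝ) 1)), ‖y t‖ ≤ M := by
    filter_upwards [ae_restrict_mem measurableSet_Ioc, hne_ae] with t ht htne
    exact hM t ⟨ht.1.le, ht.2⟩ htne
  have hg_int : IntegrableOn g (Ioc (0:ℝ) 1) := by
    have hky : IntegrableOn k (Ioc (0:ℝ) 1) := hk.mono_set Ioc_subset_Icc_self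
    have h4 : IntegrableOn (fun t => y t * k t) (Ioc (0:ℝ) 1) :=
      hky.bdd_mul (c := M) hymeas hybd_ae
    exact h4.congr (Filter.Eventually.of_forall fun t => mul_comm (y t) (k t))
  have hgii1 : IntervalIntegrable g volume 0 1 :=
    (intervalIntegrable_iff_integrableOn_Ioc_of_le h01).mpr hg_int
  have hy'cont : ContinuousOn y' (Icc (0:ℝ) 1) := by
    have hpr : ContinuousOn (fun x => y' 0 + ∫ t in (0:ℝ)..x, g t) (Icc (0:ℝ) 1) := by
      have hp := intervalIntegral.continuousOn_primitive_interval' (a := 0) hgii1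
        (by rw [uIcc_of_le h01]; exact ⟨le_rfl, h01⟩)
      rw [uIcc_of_le h01] at hp
      exact continuousOn_const.add hp
    exact hpr.congr fun x hx => h.2 x hx
  have hy'_int : IntegrableOn y' (Ioc (0:ℝ) 1) :=
    hy'cont.integrableOn_Icc.mono_set Ioc_subset_Icc_self
  have hy'ii1 : IntervalIntegrable y' volume 0 1 :=
    (intervalIntegrable_iff_integrableOn_Ioc_of_le h01).mpr hy'_int
  have hycont : ContinuousOn y (Icc (0:ℝ) 1) := by
    have hpr : ContinuousOn (fun x => y 0 + ∫ t in (0:ℝ)..x, y' t) (Icc (0:ℝ) 1) := by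
      have hp := intervalIntegral.continuousOn_primitive_interval' (a := 0) hy'ii1
        (by rw [uIcc_of_le h01]; exact ⟨le_rfl, h01⟩)
      rw [uIcc_of_le h01] at hp
      exact continuousOn_const.add hp
    exact hpr.congr fun x hx => h.1 x hx
  exact ⟨hycont, hy'cont, hy'_int, hg_int⟩


/-- for real `λ`, if `φ(1,λ) = 0` (Dirichlet eigenvalue) or `ϑ′(1,λ) = 0`
(Neumann eigenvalue), then `Δ₀(λ) = 2·Δ(λ)² − 1`, this value is real and `≥ 1`;
if moreover `Δ(λ)² = 1`, then `Δ₀(λ) = 1`. -/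
theorem lyapunov_at_dirichlet_or_neumann_eigenvalue
    (q : ℝ → ℝ) (hq : MemLp q 2 (volume.restrict (Set.Icc (0:ℝ) 1)))
    (lam : ℝ) (th th' ph ph' : ℝ → ℂ)
    (hth : IsSol q (lam : ℂ) th th') (hth0 : th 0 = 1) (hth'0 : th' 0 = 0)
    (hph : IsSol q (lam : ℂ) ph ph') (hph0 : ph 0 = 0) (hph'0 : ph' 0 = 1)
    -- for real `λ` the fundamental solutions are real-valued on `[0,1]`:
    (hreal : ∀ x ∈ Set.Icc (0:ℝ) 1,
      (th x).im = 0 ∧ (th' x).im = 0 ∧ (ph x).im = 0 ∧ (ph' x).im = 0)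
    (heig : ph 1 = 0 ∨ th' 1 = 0) :
    2 * ((ph' 1 + th 1) / 2) ^ 2 + th' 1 * ph 1 / 4 - 1 =
        2 * ((ph' 1 + th 1) / 2) ^ 2 - 1 ∧
    (2 * ((ph' 1 + th 1) / 2) ^ 2 + th' 1 * ph 1 / 4 - 1).im = 0 ∧
    1 ≤ (2 * ((ph' 1 + th 1) / 2) ^ 2 + th' 1 * ph 1 / 4 - 1).re ∧
    (((ph' 1 + th 1) / 2) ^ 2 = 1 →
      2 * ((ph' 1 + th 1) / 2) ^ 2 + th' 1 * ph 1 / 4 - 1 = 1) := by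
  obtain ⟨thc, th'c, th'i, gthi⟩ := regular q hq (lam : ℂ) th th' hth
  obtain ⟨phc, ph'c, ph'i, gphi⟩ := regular q hq (lam : ℂ) ph ph' hph
  have P1 := parts th ph' th' (fun t => ((q t : ℂ) - (lam : ℂ)) * ph t)
    thc ph'c th'i gphi hth.1 hph.2
  have P2 := parts ph th' ph' (fun t => ((q t : ℂ) - (lam : ℂ)) * th t)
    phc th'c ph'i gthi hph.1 hth.2
  have hcross : (∫ t in Ioc (0:ℝ) 1, th t * (((q t : ℂ) - (lam : ℂ)) * ph t))
      = ∫ t in Ioc (0:ℝ) 1, ph t * (((q t : ℂ) - (lam : ℂ)) * th t) :=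
    setIntegral_congr_ae measurableSet_Ioc (Filter.Eventually.of_forall fun t _ => by ring)
  have hcross2 : (∫ t in Ioc (0:ℝ) 1, th' t * ph' t) = ∫ t in Ioc (0:ℝ) 1, ph' t * th' t :=
    setIntegral_congr_ae measurableSet_Ioc (Filter.Eventually.of_forall fun t _ => mul_comm _ _)
  rw [hth0, hph'0] at P1
  rw [hph0, hth'0] at P2
  beta_reduce at P1 P2
  have hW : th 1 * ph' 1 - th' 1 * ph 1 = 1 := by
    linear_combination P1 - P2 + hcross + hcross2
  have h0 : th' 1 * ph 1 = 0 := by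
    rcases heig with h' | h' <;> simp [h']
  have hTP : th 1 * ph' 1 = 1 := by linear_combination hW + h0
  obtain ⟨hthim, _, _, hph'im⟩ := hreal 1 ⟨zero_le_one, le_rfl⟩
  set a := (th 1).re with ha
  set b := (ph' 1).re with hb
  have hth1 : th 1 = (a : ℂ) := Complex.ext rfl (by simp [hthim])
  have hph'1 : ph' 1 = (b : ℂ) := Complex.ext rfl (by simp [hph'im])
  have hab : a * b = 1 := by
    have h5 : ((a * b : ℝ) : ℂ) = 1 := by push_cast; rw [← hth1, ← hph'1]; exact hTP
    exact_mod_cast h5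
  have hE : 2 * ((ph' 1 + th 1) / 2) ^ 2 + th' 1 * ph 1 / 4 - 1
      = (((2 * ((b + a) / 2) ^ 2 - 1 : ℝ)) : ℂ) := by
    rw [h0, hth1, hph'1]; push_cast; ring
  refine ⟨by rw [h0]; ring, ?_, ?_, ?_⟩
  · rw [hE]; exact Complex.ofReal_im _
  · rw [hE, Complex.ofReal_re]
    nlinarith [sq_nonneg (b - a), hab]
  · intro hD
    rw [h0, hD]; ring

end
end

section
/- If λ ∈ ℝ satisfies Δ(λ) = 0, then Δ₀(λ) = −(5 + ϑ(1,λ)²)/4; in particular Δ₀(λ) is real and Δ₀(λ) ≤ −5/4. -/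
open MeasureTheory Set

noncomputable section


lemma symm_fubini (φ ψ : ℝ → ℂ) (hφ : IntegrableOn φ (Set.Ioc (0:ℝ) 1))
    (hψ : IntegrableOn ψ (Set.Ioc (0:ℝ) 1)) :
    (∫ x in Set.Ioc (0:ℝ) 1, φ x * ∫ t in Set.Ioc (0:ℝ) x, ψ t) +
      (∫ x in Set.Ioc (0:ℝ) 1, ψ x * ∫ t in Set.Ioc (0:ℝ) x, φ t) =
      (∫ x in Set.Ioc (0:ℝ) 1, φ x) * (∫ x in Set.Ioc (0:ℝ) 1, ψ x) := by
  set μ := volume.restrict (Ioc (0:ℝ) 1) with hμ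
  set s : Set (ℝ × ℝ) := {p | p.2 ≤ p.1} with hsdef
  have hsm : MeasurableSet s := measurableSet_le measurable_snd measurable_fst
  set H : ℝ × ℝ → ℂ := s.indicator (fun p => φ p.1 * ψ p.2) with hHdef
  have hint : Integrable (fun p : ℝ × ℝ => φ p.1 * ψ p.2) (μ.prod μ) :=
    Integrable.mul_prod hφ hψ
  have hHint : Integrable H (μ.prod μ) := hint.indicator hsm
  -- evaluation 1: x outer
  have h1 : ∫ p, H p ∂(μ.prod μ)
      = ∫ x in Ioc (0:ℝ) 1, φ x * ∫ t in Ioc (0:ℝ) x, ψ t := by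
    rw [MeasureTheory.integral_prod _ hHint]
    refine setIntegral_congr_ae measurableSet_Ioc
      (Filter.Eventually.of_forall fun x hx => ?_)
    have hpt : ∀ y, H (x, y) = (Iic x).indicator (fun y => φ x * ψ y) y := by
      intro y
      by_cases h : y ≤ x <;> simp [hHdef, hsdef, Set.indicator, h]
    simp only [hpt]
    rw [MeasureTheory.integral_indicator measurableSet_Iic, hμ,
      Measure.restrict_restrict measurableSet_Iic]
    have hset : Iic x ∩ Ioc (0:ℝ) 1 = Ioc (0:ℝ) x := by
      rw [Set.inter_comm, Set.Ioc_inter_Iic, min_eq_right hx.2]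
    rw [hset, MeasureTheory.integral_const_mul]
  -- evaluation 2: y outer
  have h2 : ∫ p, H p ∂(μ.prod μ)
      = ∫ y in Ioc (0:ℝ) 1,
          ψ y * ((∫ x in Ioc (0:ℝ) 1, φ x) - ∫ x in Ioc (0:ℝ) y, φ x) := by
    rw [MeasureTheory.integral_prod_symm _ hHint]
    refine setIntegral_congr_ae measurableSet_Ioc
      (Filter.Eventually.of_forall fun y hy => ?_)
    have hpt : ∀ x, H (x, y) = (Ici y).indicator (fun x => φ x * ψ y) x := by
      intro x
      by_cases h : y ≤ x <;> simp [hHdef, hsdef, Set.indicator, h]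
    simp only [hpt]
    rw [MeasureTheory.integral_indicator measurableSet_Ici, hμ,
      Measure.restrict_restrict measurableSet_Ici]
    have hset : Ici y ∩ Ioc (0:ℝ) 1 = Icc y 1 := by
      ext z
      constructor
      · rintro ⟨h1, h2, h3⟩; exact ⟨h1, h3⟩
      · rintro ⟨h1, h2⟩; exact ⟨h1, lt_of_lt_of_le hy.1 h1, h2⟩
    rw [hset, MeasureTheory.integral_Icc_eq_integral_Ioc,
      MeasureTheory.integral_mul_const]
    have hsplit : (∫ x in Ioc (0:ℝ) y, φ x) + (∫ x in Ioc y 1, φ x)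
        = ∫ x in Ioc (0:ℝ) 1, φ x := by
      rw [← MeasureTheory.setIntegral_union ((Set.Ioc_disjoint_Ioc_of_le le_rfl)) measurableSet_Ioc
        (hφ.mono_set (Set.Ioc_subset_Ioc_right hy.2)) (hφ.mono_set (Set.Ioc_subset_Ioc_left hy.1.le)),
        Set.Ioc_union_Ioc_eq_Ioc hy.1.le hy.2]
    linear_combination (ψ y) * hsplit
  -- split the RHS of h2
  have hPcont : ContinuousOn (fun y => ∫ x in Ioc (0:ℝ) y, φ x) (Icc 0 1) :=
    intervalIntegral.continuousOn_primitive ((integrableOn_Icc_iff_integrableOn_Ioc).mpr hφ)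
  obtain ⟨Cb, hCb⟩ := isCompact_Icc.exists_bound_of_continuousOn hPcont
  have hPint : Integrable (fun y => ψ y * ∫ x in Ioc (0:ℝ) y, φ x) μ := by
    have h0 : Integrable (fun y => (∫ x in Ioc (0:ℝ) y, φ x) * ψ y) μ := by
      refine Integrable.bdd_mul (c := Cb) hψ
        ((hPcont.mono Ioc_subset_Icc_self).aestronglyMeasurable measurableSet_Ioc) ?_
      refine (ae_restrict_iff' measurableSet_Ioc).mpr
        (Filter.Eventually.of_forall fun y hy => hCb y ⟨hy.1.le, hy.2⟩)
    exact h0.congr (Filter.Eventually.of_forall fun y => mul_comm _ _)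
  have h3 : ∫ y in Ioc (0:ℝ) 1,
      ψ y * ((∫ x in Ioc (0:ℝ) 1, φ x) - ∫ x in Ioc (0:ℝ) y, φ x)
      = (∫ y in Ioc (0:ℝ) 1, ψ y) * (∫ x in Ioc (0:ℝ) 1, φ x)
        - ∫ y in Ioc (0:ℝ) 1, ψ y * ∫ x in Ioc (0:ℝ) y, φ x := by
    have : ∀ y, ψ y * ((∫ x in Ioc (0:ℝ) 1, φ x) - ∫ x in Ioc (0:ℝ) y, φ x)
        = ψ y * (∫ x in Ioc (0:ℝ) 1, φ x) - ψ y * ∫ x in Ioc (0:ℝ) y, φ x := fun y => by ring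
    simp only [this]
    rw [MeasureTheory.integral_sub (hψ.mul_const _) hPint, MeasureTheory.integral_mul_const]
  rw [h1] at h2
  rw [h3] at h2
  linear_combination h2

lemma wronskian_const (f y1 y1' y2 y2' : ℝ → ℂ)
    (h1i : IntegrableOn y1' (Set.Ioc (0:ℝ) 1))
    (h2i : IntegrableOn y2' (Set.Ioc (0:ℝ) 1))
    (hf1 : IntegrableOn (fun t => f t * y1 t) (Set.Ioc (0:ℝ) 1))
    (hf2 : IntegrableOn (fun t => f t * y2 t) (Set.Ioc (0:ℝ) 1))
    (c1 : ContinuousOn y1 (Set.Icc (0:ℝ) 1)) (c1' : ContinuousOn y1' (Set.Icc (0:ℝ) 1))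
    (c2 : ContinuousOn y2 (Set.Icc (0:ℝ) 1)) (c2' : ContinuousOn y2' (Set.Icc (0:ℝ) 1))
    (E11 : ∀ x ∈ Set.Icc (0:ℝ) 1, y1 x = y1 0 + ∫ t in Set.Ioc (0:ℝ) x, y1' t)
    (E12 : ∀ x ∈ Set.Icc (0:ℝ) 1, y1' x = y1' 0 + ∫ t in Set.Ioc (0:ℝ) x, f t * y1 t)
    (E21 : ∀ x ∈ Set.Icc (0:ℝ) 1, y2 x = y2 0 + ∫ t in Set.Ioc (0:ℝ) x, y2' t)
    (E22 : ∀ x ∈ Set.Icc (0:ℝ) 1, y2' x = y2' 0 + ∫ t in Set.Ioc (0:ℝ) x, f t * y2 t) :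
    y1 1 * y2' 1 - y1' 1 * y2 1 = y1 0 * y2' 0 - y1' 0 * y2 0 := by
  -- bounds from continuity
  obtain ⟨M1, hM1⟩ := isCompact_Icc.exists_bound_of_continuousOn c1
  obtain ⟨M1', hM1'⟩ := isCompact_Icc.exists_bound_of_continuousOn c1'
  obtain ⟨M2, hM2⟩ := isCompact_Icc.exists_bound_of_continuousOn c2
  obtain ⟨M2', hM2'⟩ := isCompact_Icc.exists_bound_of_continuousOn c2'
  have asm : ∀ {w : ℝ → ℂ}, ContinuousOn w (Set.Icc (0:ℝ) 1) →
      AEStronglyMeasurable w (volume.restrict (Ioc (0:ℝ) 1)) := fun hw =>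
    (hw.mono Ioc_subset_Icc_self).aestronglyMeasurable measurableSet_Ioc
  have bdd : ∀ {w : ℝ → ℂ} {M : ℝ}, (∀ x ∈ Set.Icc (0:ℝ) 1, ‖w x‖ ≤ M) →
      (∀ᵐ x ∂(volume.restrict (Ioc (0:ℝ) 1)), ‖w x‖ ≤ M) := fun hw =>
    (ae_restrict_iff' measurableSet_Ioc).mpr
      (Filter.Eventually.of_forall fun x hx => hw x ⟨hx.1.le, hx.2⟩)
  -- integrable products
  have i12 : Integrable (fun t => y1' t * y2' t) (volume.restrict (Ioc (0:ℝ) 1)) :=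
    Integrable.bdd_mul (c := M1') h2i (asm c1') (bdd hM1')
  have i21 : Integrable (fun t => y2' t * y1' t) (volume.restrict (Ioc (0:ℝ) 1)) :=
    i12.congr (Filter.Eventually.of_forall fun t => mul_comm _ _)
  have if21 : Integrable (fun t => y1 t * (f t * y2 t)) (volume.restrict (Ioc (0:ℝ) 1)) :=
    Integrable.bdd_mul (c := M1) hf2 (asm c1) (bdd hM1)
  have if12 : Integrable (fun t => y2 t * (f t * y1 t)) (volume.restrict (Ioc (0:ℝ) 1)) :=
    Integrable.bdd_mul (c := M2) hf1 (asm c2) (bdd hM2)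
  -- abbreviations
  set A := ∫ t in Set.Ioc (0:ℝ) 1, y1' t with hA
  set B := ∫ t in Set.Ioc (0:ℝ) 1, y2' t with hB
  set C := ∫ t in Set.Ioc (0:ℝ) 1, f t * y1 t with hC
  set D := ∫ t in Set.Ioc (0:ℝ) 1, f t * y2 t with hD
  have one_mem : (1:ℝ) ∈ Set.Icc (0:ℝ) 1 := ⟨zero_le_one, le_refl 1⟩
  -- Fubini pair 1 : φ = y1', ψ = f·y2
  have S1 := symm_fubini y1' (fun t => f t * y2 t) h1i hf2
  -- Fubini pair 2 : φ = f·y1, ψ = y2'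
  have S2 := symm_fubini (fun t => f t * y1 t) y2' hf1 h2i
  -- rewrite inner primitives via the integral equations
  have r1 : (∫ x in Set.Ioc (0:ℝ) 1, y1' x * ∫ t in Set.Ioc (0:ℝ) x, f t * y2 t)
      = (∫ x in Set.Ioc (0:ℝ) 1, y1' x * y2' x) - A * y2' 0 := by
    have : ∀ x ∈ Set.Ioc (0:ℝ) 1,
        y1' x * ∫ t in Set.Ioc (0:ℝ) x, f t * y2 t = y1' x * y2' x - y1' x * y2' 0 := by
      intro x hx
      have := E22 x ⟨hx.1.le, hx.2⟩
      linear_combination (y1' x) * this.symm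
    rw [setIntegral_congr_ae measurableSet_Ioc (Filter.Eventually.of_forall this),
      MeasureTheory.integral_sub i12 (h1i.mul_const _), MeasureTheory.integral_mul_const]
  have r2 : (∫ x in Set.Ioc (0:ℝ) 1, (f x * y2 x) * ∫ t in Set.Ioc (0:ℝ) x, y1' t)
      = (∫ x in Set.Ioc (0:ℝ) 1, (f x * y2 x) * y1 x) - D * y1 0 := by
    have : ∀ x ∈ Set.Ioc (0:ℝ) 1,
        (f x * y2 x) * ∫ t in Set.Ioc (0:ℝ) x, y1' t
          = (f x * y2 x) * y1 x - (f x * y2 x) * y1 0 := by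
      intro x hx
      have := E11 x ⟨hx.1.le, hx.2⟩
      linear_combination (f x * y2 x) * this.symm
    have ifc : Integrable (fun x => (f x * y2 x) * y1 x) (volume.restrict (Ioc (0:ℝ) 1)) :=
      if21.congr (Filter.Eventually.of_forall fun t => by ring)
    rw [setIntegral_congr_ae measurableSet_Ioc (Filter.Eventually.of_forall this),
      MeasureTheory.integral_sub ifc (hf2.mul_const _), MeasureTheory.integral_mul_const]
  have r3 : (∫ x in Set.Ioc (0:ℝ) 1, (f x * y1 x) * ∫ t in Set.Ioc (0:ℝ) x, y2' t)
      = (∫ x in Set.Ioc (0:ℝ) 1, (f x * y1 x) * y2 x) - C * y2 0 := by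
    have : ∀ x ∈ Set.Ioc (0:ℝ) 1,
        (f x * y1 x) * ∫ t in Set.Ioc (0:ℝ) x, y2' t
          = (f x * y1 x) * y2 x - (f x * y1 x) * y2 0 := by
      intro x hx
      have := E21 x ⟨hx.1.le, hx.2⟩
      linear_combination (f x * y1 x) * this.symm
    have ifc : Integrable (fun x => (f x * y1 x) * y2 x) (volume.restrict (Ioc (0:ℝ) 1)) :=
      if12.congr (Filter.Eventually.of_forall fun t => by ring)
    rw [setIntegral_congr_ae measurableSet_Ioc (Filter.Eventually.of_forall this),
      MeasureTheory.integral_sub ifc (hf1.mul_const _), MeasureTheory.integral_mul_const]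
  have r4 : (∫ x in Set.Ioc (0:ℝ) 1, y2' x * ∫ t in Set.Ioc (0:ℝ) x, f t * y1 t)
      = (∫ x in Set.Ioc (0:ℝ) 1, y2' x * y1' x) - B * y1' 0 := by
    have : ∀ x ∈ Set.Ioc (0:ℝ) 1,
        y2' x * ∫ t in Set.Ioc (0:ℝ) x, f t * y1 t = y2' x * y1' x - y2' x * y1' 0 := by
      intro x hx
      have := E12 x ⟨hx.1.le, hx.2⟩
      linear_combination (y2' x) * this.symm
    rw [setIntegral_congr_ae measurableSet_Ioc (Filter.Eventually.of_forall this),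
      MeasureTheory.integral_sub i21 (h2i.mul_const _), MeasureTheory.integral_mul_const]
  rw [r1, r2] at S1
  rw [r3, r4] at S2
  have ec : (∫ x in Set.Ioc (0:ℝ) 1, y2' x * y1' x)
      = ∫ x in Set.Ioc (0:ℝ) 1, y1' x * y2' x :=
    setIntegral_congr_ae measurableSet_Ioc
      (Filter.Eventually.of_forall fun x _ => mul_comm _ _)
  have ef : (∫ x in Set.Ioc (0:ℝ) 1, (f x * y1 x) * y2 x)
      = ∫ x in Set.Ioc (0:ℝ) 1, (f x * y2 x) * y1 x :=
    setIntegral_congr_ae measurableSet_Ioc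
      (Filter.Eventually.of_forall fun x _ => by ring)
  rw [ec, ef] at S2
  rw [E11 1 one_mem, E12 1 one_mem, E21 1 one_mem, E22 1 one_mem]
  linear_combination S2 - S1


lemma solution_regularity (f y y' : ℝ → ℂ)
    (hf : IntegrableOn f (Set.Ioc (0:ℝ) 1))
    (E1 : ∀ x ∈ Set.Icc (0:ℝ) 1, y x = y 0 + ∫ t in Set.Ioc (0:ℝ) x, y' t)
    (E2 : ∀ x ∈ Set.Icc (0:ℝ) 1, y' x = y' 0 + ∫ t in Set.Ioc (0:ℝ) x, f t * y t) :
    IntegrableOn y' (Set.Ioc (0:ℝ) 1) ∧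
    IntegrableOn (fun t => f t * y t) (Set.Ioc (0:ℝ) 1) ∧
    ContinuousOn y (Set.Icc (0:ℝ) 1) ∧ ContinuousOn y' (Set.Icc (0:ℝ) 1) := by
  classical
  set fy : ℝ → ℂ := fun t => f t * y t with hfydef
  set u0 := ‖y 0‖ with hu0
  set v0 := ‖y' 0‖ with hv0
  set k : ℝ → ℝ := fun t => 1 + ‖f t‖ with hkdef
  have hfIcc : IntegrableOn f (Icc (0:ℝ) 1) := (integrableOn_Icc_iff_integrableOn_Ioc).mpr hf
  have hkIcc : IntegrableOn k (Icc (0:ℝ) 1) := by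
    refine Integrable.add ?_ hfIcc.norm
    exact integrableOn_const measure_Icc_lt_top.ne
  have hknn : ∀ t, 0 ≤ k t := fun t => by positivity
  have hk1 : ∀ t, 1 ≤ k t := fun t => by
    simp only [hkdef, le_add_iff_nonneg_right]; positivity
  set K := ∫ t in Ioc (0:ℝ) 1, k t with hKdef
  have hKnn : 0 ≤ K := setIntegral_nonneg measurableSet_Ioc fun t _ => hknn t
  have hkx : ∀ {x : ℝ}, x ∈ Icc (0:ℝ) 1 → IntegrableOn k (Ioc (0:ℝ) x) :=
    fun {x} hx => ((integrableOn_Icc_iff_integrableOn_Ioc).mp hkIcc).mono_set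
      (Ioc_subset_Ioc_right hx.2)
  have hKx : ∀ {x : ℝ}, x ∈ Icc (0:ℝ) 1 → ∫ t in Ioc (0:ℝ) x, k t ≤ K := by
    intro x hx
    refine setIntegral_mono_set ((integrableOn_Icc_iff_integrableOn_Ioc).mp hkIcc)
      ((ae_restrict_iff' measurableSet_Ioc).mpr
        (Filter.Eventually.of_forall fun t _ => hknn t)) ?_
    exact HasSubset.Subset.eventuallyLE (Ioc_subset_Ioc_right hx.2)
  -- the "genuine" sets
  set B : Set ℝ := {x | x ∈ Icc (0:ℝ) 1 ∧ IntegrableOn y' (Ioc (0:ℝ) x)} with hBdef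
  set C : Set ℝ := {x | x ∈ Icc (0:ℝ) 1 ∧ IntegrableOn fy (Ioc (0:ℝ) x)} with hCdef
  set G : Set ℝ := B ∩ C with hGdef
  have hBdc : ∀ {x z : ℝ}, x ∈ B → z ∈ Icc 0 x → z ∈ B := by
    rintro x z ⟨hx1, hx2⟩ hz
    exact ⟨⟨hz.1, hz.2.trans hx1.2⟩, hx2.mono_set (Ioc_subset_Ioc_right hz.2)⟩
  have hCdc : ∀ {x z : ℝ}, x ∈ C → z ∈ Icc 0 x → z ∈ C := by
    rintro x z ⟨hx1, hx2⟩ hz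
    exact ⟨⟨hz.1, hz.2.trans hx1.2⟩, hx2.mono_set (Ioc_subset_Ioc_right hz.2)⟩
  have hGdc : ∀ {x z : ℝ}, x ∈ G → z ∈ Icc 0 x → z ∈ G := by
    rintro x z ⟨hxB, hxC⟩ hz
    exact ⟨hBdc hxB hz, hCdc hxC hz⟩
  have h0G : (0:ℝ) ∈ G := by
    constructor <;>
      exact ⟨⟨le_refl 0, zero_le_one⟩, by rw [Set.Ioc_self]; exact integrableOn_empty⟩
  -- junk value lemmas
  have junkY : ∀ x ∈ Icc (0:ℝ) 1, ¬ IntegrableOn y' (Ioc (0:ℝ) x) → y x = y 0 := by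
    intro x hx hni
    rw [E1 x hx, MeasureTheory.integral_undef hni, add_zero]
  have junkY' : ∀ x ∈ Icc (0:ℝ) 1, ¬ IntegrableOn fy (Ioc (0:ℝ) x) → y' x = y' 0 := by
    intro x hx hni
    rw [E2 x hx, MeasureTheory.integral_undef hni, add_zero]
  -- primitive norms
  set a : ℝ → ℝ := fun x => ∫ t in Ioc (0:ℝ) x, ‖y' t‖ with hadef
  set c : ℝ → ℝ := fun x => ∫ t in Ioc (0:ℝ) x, ‖fy t‖ with hcdef
  set g : ℝ → ℝ := fun x => a x + c x with hgdef
  have hann : ∀ x, 0 ≤ a x := fun x =>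
    setIntegral_nonneg measurableSet_Ioc fun t _ => norm_nonneg _
  have hcnn : ∀ x, 0 ≤ c x := fun x =>
    setIntegral_nonneg measurableSet_Ioc fun t _ => norm_nonneg _
  have hgnn : ∀ x, 0 ≤ g x := fun x => add_nonneg (hann x) (hcnn x)
  -- pointwise bounds on the genuine sets
  have hy'C : ∀ x ∈ C, ‖y' x‖ ≤ v0 + c x := by
    rintro x ⟨hx1, hx2⟩
    rw [E2 x hx1]
    refine (norm_add_le _ _).trans (add_le_add le_rfl ?_)
    exact (norm_integral_le_integral_norm _)
  have hyB : ∀ x ∈ B, ‖y x‖ ≤ u0 + a x := by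
    rintro x ⟨hx1, hx2⟩
    rw [E1 x hx1]
    refine (norm_add_le _ _).trans (add_le_add le_rfl ?_)
    exact (norm_integral_le_integral_norm _)
  -- monotonicity of g on G
  have hamono : ∀ {x z : ℝ}, x ∈ B → z ∈ Icc 0 x → a z ≤ a x := by
    rintro x z ⟨hx1, hx2⟩ hz
    refine setIntegral_mono_set hx2.norm
      ((ae_restrict_iff' measurableSet_Ioc).mpr
        (Filter.Eventually.of_forall fun t _ => norm_nonneg _)) ?_
    exact HasSubset.Subset.eventuallyLE (Ioc_subset_Ioc_right hz.2)
  have hcmono : ∀ {x z : ℝ}, x ∈ C → z ∈ Icc 0 x → c z ≤ c x := by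
    rintro x z ⟨hx1, hx2⟩ hz
    refine setIntegral_mono_set hx2.norm
      ((ae_restrict_iff' measurableSet_Ioc).mpr
        (Filter.Eventually.of_forall fun t _ => norm_nonneg _)) ?_
    exact HasSubset.Subset.eventuallyLE (Ioc_subset_Ioc_right hz.2)
  have hgmono : ∀ {x z : ℝ}, x ∈ G → z ∈ Icc 0 x → g z ≤ g x := fun hx hz =>
    add_le_add (hamono hx.1 hz) (hcmono hx.2 hz)
  -- continuity of g on Icc 0 x for x ∈ G
  have hgCont : ∀ {x : ℝ}, x ∈ G → ContinuousOn g (Icc (0:ℝ) x) := by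
    rintro x ⟨⟨hx1, hxB⟩, hx1', hxC⟩
    exact (intervalIntegral.continuousOn_primitive
        ((integrableOn_Icc_iff_integrableOn_Ioc).mpr hxB.norm)).add
      (intervalIntegral.continuousOn_primitive
        ((integrableOn_Icc_iff_integrableOn_Ioc).mpr hxC.norm))
  -- central Gronwall-type inequality
  have hgrow : ∀ x ∈ G, g x ≤ (v0 + u0 * K) + ∫ t in Ioc (0:ℝ) x, g t * k t := by
    rintro x hxG
    obtain ⟨⟨hx1, hxB⟩, hx1', hxC⟩ := hxG
    have hx01 : x ∈ Icc (0:ℝ) 1 := hx1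
    -- continuity of a, c on Icc 0 x
    have haC : ContinuousOn a (Icc (0:ℝ) x) := intervalIntegral.continuousOn_primitive
      ((integrableOn_Icc_iff_integrableOn_Ioc).mpr hxB.norm)
    have hcC : ContinuousOn c (Icc (0:ℝ) x) := intervalIntegral.continuousOn_primitive
      ((integrableOn_Icc_iff_integrableOn_Ioc).mpr hxC.norm)
    have hcint : IntegrableOn c (Ioc (0:ℝ) x) :=
      (hcC.integrableOn_Icc).mono_set Ioc_subset_Icc_self
    have haint : IntegrableOn a (Ioc (0:ℝ) x) :=
      (haC.integrableOn_Icc).mono_set Ioc_subset_Icc_self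
    have hfx : IntegrableOn (fun t => ‖f t‖) (Ioc (0:ℝ) x) :=
      (hf.mono_set (Ioc_subset_Ioc_right hx1.2)).norm
    -- a x ≤ ∫ (v0 + c)
    have hax : a x ≤ ∫ t in Ioc (0:ℝ) x, (v0 + c t) := by
      refine setIntegral_mono_on hxB.norm
        ((integrableOn_const measure_Ioc_lt_top.ne).add hcint)
        measurableSet_Ioc ?_
      intro t ht
      exact hy'C t (hCdc ⟨hx1, hxC⟩ ⟨ht.1.le, ht.2⟩)
    -- c x ≤ ∫ (u0 + a) * ‖f‖
    have hcx : c x ≤ ∫ t in Ioc (0:ℝ) x, (u0 + a t) * ‖f t‖ := by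
      have hint : IntegrableOn (fun t => (u0 + a t) * ‖f t‖) (Ioc (0:ℝ) x) := by
        obtain ⟨Ca, hCa⟩ := isCompact_Icc.exists_bound_of_continuousOn
          (continuousOn_const.add haC)
        refine Integrable.bdd_mul (c := Ca) hfx
          (((continuousOn_const.add haC).mono Ioc_subset_Icc_self).aestronglyMeasurable
            measurableSet_Ioc) ?_
        exact (ae_restrict_iff' measurableSet_Ioc).mpr
          (Filter.Eventually.of_forall fun t ht => by
            simpa using hCa t ⟨ht.1.le, ht.2⟩)
      refine setIntegral_mono_on hxC.norm hint measurableSet_Ioc ?_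
      intro t ht
      have htB : t ∈ B := hBdc ⟨hx1, hxB⟩ ⟨ht.1.le, ht.2⟩
      have : ‖fy t‖ = ‖f t‖ * ‖y t‖ := by
        simp [hfydef, norm_mul, mul_comm]
      rw [this, mul_comm ‖f t‖ ‖y t‖]
      exact mul_le_mul_of_nonneg_right
        ((hyB t htB).trans (le_refl _)) (norm_nonneg _)
    -- combine
    have hsum : (∫ t in Ioc (0:ℝ) x, (v0 + c t)) + ∫ t in Ioc (0:ℝ) x, (u0 + a t) * ‖f t‖
        ≤ (v0 + u0 * K) + ∫ t in Ioc (0:ℝ) x, g t * k t := by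
      have hgk : IntegrableOn (fun t => g t * k t) (Ioc (0:ℝ) x) := by
        obtain ⟨Cg, hCg⟩ := isCompact_Icc.exists_bound_of_continuousOn (hgCont ⟨⟨hx1, hxB⟩, hx1', hxC⟩)
        refine Integrable.bdd_mul (c := Cg) (hkx hx1)
          (((hgCont ⟨⟨hx1, hxB⟩, hx1', hxC⟩).mono Ioc_subset_Icc_self).aestronglyMeasurable
            measurableSet_Ioc) ?_
        exact (ae_restrict_iff' measurableSet_Ioc).mpr
          (Filter.Eventually.of_forall fun t ht => by
            simpa using hCg t ⟨ht.1.le, ht.2⟩)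
      have step : ∫ t in Ioc (0:ℝ) x, ((v0 + c t) + (u0 + a t) * ‖f t‖)
          ≤ ∫ t in Ioc (0:ℝ) x, (v0 + u0 * k t + g t * k t) := by
        refine setIntegral_mono_on ?_ ?_ measurableSet_Ioc ?_
        · exact ((integrableOn_const measure_Ioc_lt_top.ne).add hcint).add
            (by
              obtain ⟨Ca, hCa⟩ := isCompact_Icc.exists_bound_of_continuousOn
                (continuousOn_const.add haC)
              refine Integrable.bdd_mul (c := Ca) hfx
                (((continuousOn_const.add haC).mono Ioc_subset_Icc_self).aestronglyMeasurable
                  measurableSet_Ioc) ?_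
              exact (ae_restrict_iff' measurableSet_Ioc).mpr
                (Filter.Eventually.of_forall fun t ht => by
                  simpa using hCa t ⟨ht.1.le, ht.2⟩))
        · refine Integrable.add ?_ hgk
          exact (integrableOn_const measure_Ioc_lt_top.ne).add
            ((hkx hx1).const_mul u0)
        · intro t ht
          have h3 : 1 ≤ k t := hk1 t
          have h5 : ‖f t‖ ≤ k t := by simp only [hkdef]; linarith
          have h7 : 0 ≤ u0 := norm_nonneg _
          have h8 : g t * k t = a t * k t + c t * k t := by
            simp only [hgdef]; ring
          have h9 : u0 * ‖f t‖ ≤ u0 * k t := mul_le_mul_of_nonneg_left h5 h7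
          have h10 : a t * ‖f t‖ ≤ a t * k t := mul_le_mul_of_nonneg_left h5 (hann t)
          have h11 : c t ≤ c t * k t := le_mul_of_one_le_right (hcnn t) h3
          nlinarith [h8, h9, h10, h11]
      have split1 : ∫ t in Ioc (0:ℝ) x, ((v0 + c t) + (u0 + a t) * ‖f t‖)
          = (∫ t in Ioc (0:ℝ) x, (v0 + c t)) + ∫ t in Ioc (0:ℝ) x, (u0 + a t) * ‖f t‖ := by
        refine MeasureTheory.integral_add
          ((integrableOn_const measure_Ioc_lt_top.ne).add hcint) ?_
        obtain ⟨Ca, hCa⟩ := isCompact_Icc.exists_bound_of_continuousOn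
          (continuousOn_const.add haC)
        refine Integrable.bdd_mul (c := Ca) hfx
          (((continuousOn_const.add haC).mono Ioc_subset_Icc_self).aestronglyMeasurable
            measurableSet_Ioc) ?_
        exact (ae_restrict_iff' measurableSet_Ioc).mpr
          (Filter.Eventually.of_forall fun t ht => by
            simpa using hCa t ⟨ht.1.le, ht.2⟩)
      have split2 : ∫ t in Ioc (0:ℝ) x, (v0 + u0 * k t + g t * k t)
          = (∫ t in Ioc (0:ℝ) x, (v0 + u0 * k t)) + ∫ t in Ioc (0:ℝ) x, g t * k t := by
        refine MeasureTheory.integral_add ?_ hgk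
        exact (integrableOn_const measure_Ioc_lt_top.ne).add
          ((hkx hx1).const_mul u0)
      have split3 : ∫ t in Ioc (0:ℝ) x, (v0 + u0 * k t)
          = (∫ t in Ioc (0:ℝ) x, (v0:ℝ)) + u0 * ∫ t in Ioc (0:ℝ) x, k t := by
        rw [MeasureTheory.integral_add (integrableOn_const (C := (v0:ℝ)) measure_Ioc_lt_top.ne)
          ((hkx hx1).const_mul u0), MeasureTheory.integral_const_mul]
      have hconst : ∫ t in Ioc (0:ℝ) x, (v0:ℝ) ≤ v0 := by
        rw [setIntegral_const, measureReal_def, Real.volume_Ioc, smul_eq_mul]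
        rw [ENNReal.toReal_ofReal (by linarith [hx1.1] : (0:ℝ) ≤ x - 0)]
        have : 0 ≤ v0 := norm_nonneg _
        nlinarith [hx1.2, hx1.1]
      have huK : u0 * ∫ t in Ioc (0:ℝ) x, k t ≤ u0 * K :=
        mul_le_mul_of_nonneg_left (hKx hx1) (norm_nonneg _)
      calc (∫ t in Ioc (0:ℝ) x, (v0 + c t)) + ∫ t in Ioc (0:ℝ) x, (u0 + a t) * ‖f t‖
          = ∫ t in Ioc (0:ℝ) x, ((v0 + c t) + (u0 + a t) * ‖f t‖) := split1.symm
        _ ≤ ∫ t in Ioc (0:ℝ) x, (v0 + u0 * k t + g t * k t) := step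
        _ = (∫ t in Ioc (0:ℝ) x, (v0:ℝ)) + u0 * (∫ t in Ioc (0:ℝ) x, k t)
              + ∫ t in Ioc (0:ℝ) x, g t * k t := by rw [split2, split3]
        _ ≤ (v0 + u0 * K) + ∫ t in Ioc (0:ℝ) x, g t * k t := by linarith
    calc g x = a x + c x := rfl
      _ ≤ (∫ t in Ioc (0:ℝ) x, (v0 + c t)) + ∫ t in Ioc (0:ℝ) x, (u0 + a t) * ‖f t‖ :=
          add_le_add hax hcx
      _ ≤ (v0 + u0 * K) + ∫ t in Ioc (0:ℝ) x, g t * k t := hsum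
  -- Gronwall: g is bounded on G
  obtain ⟨Mg, hMgnn, hMg⟩ : ∃ M, 0 ≤ M ∧ ∀ x ∈ G, g x ≤ M := by
    have hGsub : G ⊆ Icc (0:ℝ) 1 := fun x hx => hx.1.1
    have hGbdd : BddAbove G := ⟨1, fun x hx => (hGsub hx).2⟩
    have hGne : G.Nonempty := ⟨0, h0G⟩
    set s := sSup G with hsdef
    have hsmem : s ∈ Icc (0:ℝ) 1 :=
      ⟨le_csSup hGbdd h0G, csSup_le hGne fun x hx => (hGsub hx).2⟩
    set F : ℝ → ℝ := fun z => ∫ t in Ioc (0:ℝ) z, k t with hFdef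
    have hFc : ContinuousOn F (Icc (0:ℝ) 1) := intervalIntegral.continuousOn_primitive hkIcc
    obtain ⟨δ, hδpos, hδ⟩ : ∃ δ > 0, ∀ z ∈ Icc (0:ℝ) 1, |z - s| < δ → |F z - F s| < 1/4 := by
      have hcw := Metric.continuousWithinAt_iff.mp (hFc s hsmem) (1/4) (by norm_num)
      obtain ⟨δ, hδpos, hδ⟩ := hcw
      exact ⟨δ, hδpos, fun z hz hlt => by
        simpa [Real.dist_eq] using hδ hz (by simpa [Real.dist_eq] using hlt)⟩
    set x₁ := max 0 (s - δ/2) with hx₁def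
    have hx₁le : x₁ ≤ s := max_le hsmem.1 (by linarith)
    have hx₁G : x₁ ∈ G := by
      by_cases hcase : s - δ/2 ≤ 0
      · have : x₁ = 0 := max_eq_left hcase
        rw [this]; exact h0G
      · push_neg at hcase
        have hx₁eq : x₁ = s - δ/2 := max_eq_right (by linarith)
        have hx₁lt : x₁ < s := by rw [hx₁eq]; linarith
        obtain ⟨z, hzG, hz⟩ := exists_lt_of_lt_csSup hGne hx₁lt
        exact hGdc hzG ⟨le_max_left _ _, hz.le⟩
    have hx₁s : s - x₁ ≤ δ/2 := by
      have := le_max_right 0 (s - δ/2); simp only [hx₁def] at *; linarith [le_max_right (0:ℝ) (s - δ/2)]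
    have hsplitF : ∀ x ∈ G, x₁ < x → F x - F x₁ ≤ 1/2 := by
      intro x hxG hx
      have hxs : x ≤ s := le_csSup hGbdd hxG
      have h1 : |F x - F s| < 1/4 := hδ x (hGsub hxG) (by rw [abs_sub_comm, abs_of_nonneg (by linarith)]; linarith)
      have h2 : |F x₁ - F s| < 1/4 := hδ x₁ (hGsub hx₁G) (by rw [abs_sub_comm, abs_of_nonneg (by linarith)]; linarith)
      have := abs_lt.mp h1
      have := abs_lt.mp h2
      linarith [(abs_lt.mp h1).2, (abs_lt.mp h1).1, (abs_lt.mp h2).2, (abs_lt.mp h2).1]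
    refine ⟨max (g x₁) (2*((v0 + u0*K) + g x₁ * K)), le_trans (hgnn x₁) (le_max_left _ _), ?_⟩
    intro x hxG
    rcases le_or_gt x x₁ with hle | hlt
    · exact le_trans (hgmono hx₁G ⟨(hGsub hxG).1, hle⟩) (le_max_left _ _)
    · -- x₁ < x
      have hx01 : x ∈ Icc (0:ℝ) 1 := hGsub hxG
      have hgx := hgrow x hxG
      have hgkint : IntegrableOn (fun t => g t * k t) (Ioc (0:ℝ) x) := by
        obtain ⟨Cg, hCg⟩ := isCompact_Icc.exists_bound_of_continuousOn (hgCont hxG)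
        refine Integrable.bdd_mul (c := Cg) (hkx hx01)
          (((hgCont hxG).mono Ioc_subset_Icc_self).aestronglyMeasurable measurableSet_Ioc) ?_
        exact (ae_restrict_iff' measurableSet_Ioc).mpr
          (Filter.Eventually.of_forall fun t ht => by simpa using hCg t ⟨ht.1.le, ht.2⟩)
      have hx₁0 : (0:ℝ) ≤ x₁ := le_max_left _ _
      have hIocsplit : Ioc (0:ℝ) x = Ioc 0 x₁ ∪ Ioc x₁ x := (Set.Ioc_union_Ioc_eq_Ioc hx₁0 hlt.le).symm
      have hsplitInt : ∫ t in Ioc (0:ℝ) x, g t * k t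
          = (∫ t in Ioc (0:ℝ) x₁, g t * k t) + ∫ t in Ioc x₁ x, g t * k t := by
        rw [hIocsplit]
        exact MeasureTheory.setIntegral_union (Set.Ioc_disjoint_Ioc_of_le le_rfl) measurableSet_Ioc
          (hgkint.mono_set (by rw [hIocsplit]; exact Set.subset_union_left))
          (hgkint.mono_set (by rw [hIocsplit]; exact Set.subset_union_right))
      -- bound piece 1
      have hb1 : ∫ t in Ioc (0:ℝ) x₁, g t * k t ≤ g x₁ * K := by
        have h1 : ∫ t in Ioc (0:ℝ) x₁, g t * k t ≤ ∫ t in Ioc (0:ℝ) x₁, g x₁ * k t := by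
          refine setIntegral_mono_on
            (hgkint.mono_set (Ioc_subset_Ioc_right hlt.le))
            ((hkx (hGsub hx₁G)).const_mul _) measurableSet_Ioc ?_
          intro t ht
          exact mul_le_mul_of_nonneg_right
            (hgmono hx₁G ⟨ht.1.le, ht.2⟩) (hknn t)
        rw [MeasureTheory.integral_const_mul] at h1
        exact h1.trans (mul_le_mul_of_nonneg_left (hKx (hGsub hx₁G)) (hgnn x₁))
      -- bound piece 2
      have hb2 : ∫ t in Ioc x₁ x, g t * k t ≤ g x * (1/2) := by
        have h1 : ∫ t in Ioc x₁ x, g t * k t ≤ ∫ t in Ioc x₁ x, g x * k t := by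
          refine setIntegral_mono_on
            (hgkint.mono_set (Ioc_subset_Ioc_left hx₁0)) ?_ measurableSet_Ioc ?_
          · exact ((hkx hx01).mono_set (Ioc_subset_Ioc_left hx₁0)).const_mul _
          · intro t ht
            exact mul_le_mul_of_nonneg_right
              (hgmono hxG ⟨le_trans hx₁0 ht.1.le, ht.2⟩) (hknn t)
        rw [MeasureTheory.integral_const_mul] at h1
        have h2 : ∫ t in Ioc x₁ x, k t = F x - F x₁ := by
          have : F x = F x₁ + ∫ t in Ioc x₁ x, k t := by
            rw [hFdef]
            simp only []
            rw [hIocsplit]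
            exact MeasureTheory.setIntegral_union (Set.Ioc_disjoint_Ioc_of_le le_rfl) measurableSet_Ioc
              ((hkx hx01).mono_set (by rw [hIocsplit]; exact Set.subset_union_left))
              ((hkx hx01).mono_set (by rw [hIocsplit]; exact Set.subset_union_right))
          linarith
        rw [h2] at h1
        exact h1.trans (mul_le_mul_of_nonneg_left (hsplitF x hxG hlt) (hgnn x))
      rw [hsplitInt] at hgx
      have h' := hgx.trans (add_le_add (le_refl (v0 + u0*K)) (add_le_add hb1 hb2))
      have hfin : g x ≤ 2*((v0 + u0*K) + g x₁ * K) := by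
        revert h'
        clear_value K
        generalize g x = gx
        generalize g x₁ = gx1
        intro h'
        linarith
      exact hfin.trans (le_max_right _ _)
  -- global bound for y' on B
  set Mv := max (v0 + Mg) v0 with hMvdef
  have hMvnn : 0 ≤ Mv := le_trans (norm_nonneg _) (le_max_right _ _)
  have hy'B : ∀ x ∈ B, ‖y' x‖ ≤ Mv := by
    intro x hxB
    by_cases hxC : IntegrableOn fy (Ioc (0:ℝ) x)
    · have hxG : x ∈ G := ⟨hxB, hxB.1, hxC⟩
      have h1 : ‖y' x‖ ≤ v0 + c x := hy'C x ⟨hxB.1, hxC⟩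
      have h2 : c x ≤ g x := by
        have := hann x; simp only [hgdef]; linarith
      have h3 := hMg x hxG
      refine le_trans ?_ (le_max_left _ _)
      linarith
    · rw [junkY' x hxB.1 hxC]; exact le_max_right _ _
  -- global bound for y on Icc 0 1
  set My := u0 + Mv with hMydef
  have hMynn : 0 ≤ My := add_nonneg (norm_nonneg _) hMvnn
  have hyIcc : ∀ x ∈ Icc (0:ℝ) 1, ‖y x‖ ≤ My := by
    intro x hx
    by_cases hxB' : IntegrableOn y' (Ioc (0:ℝ) x)
    · have hxB : x ∈ B := ⟨hx, hxB'⟩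
      have h1 : a x ≤ Mv := by
        have h2 : a x ≤ ∫ t in Ioc (0:ℝ) x, Mv := by
          refine setIntegral_mono_on hxB'.norm
            (integrableOn_const measure_Ioc_lt_top.ne) measurableSet_Ioc ?_
          intro t ht
          exact hy'B t (hBdc hxB ⟨ht.1.le, ht.2⟩)
        rw [setIntegral_const, measureReal_def, Real.volume_Ioc, smul_eq_mul,
          ENNReal.toReal_ofReal (by linarith [hx.1] : (0:ℝ) ≤ x - 0)] at h2
        have h3 : (x - 0) * Mv ≤ 1 * Mv :=
          mul_le_mul_of_nonneg_right (by linarith [hx.2]) hMvnn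
        rw [one_mul] at h3
        linarith
      have h4 := hyB x hxB
      simp only [hMydef]
      linarith
    · rw [junkY x hx hxB']
      simp only [hMydef, hu0]
      exact le_add_of_nonneg_right hMvnn
  -- global bound for y' on Icc 0 1
  have hy'Icc : ∀ x ∈ Icc (0:ℝ) 1, ‖y' x‖ ≤ v0 + My * K := by
    intro x hx
    by_cases hxC : IntegrableOn fy (Ioc (0:ℝ) x)
    · have h1 : ‖y' x‖ ≤ v0 + c x := hy'C x ⟨hx, hxC⟩
      have h2 : c x ≤ My * K := by
        have hfx : IntegrableOn (fun t => ‖f t‖) (Ioc (0:ℝ) x) :=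
          (hf.mono_set (Ioc_subset_Ioc_right hx.2)).norm
        have h3 : c x ≤ ∫ t in Ioc (0:ℝ) x, My * ‖f t‖ := by
          refine setIntegral_mono_on hxC.norm (hfx.const_mul _) measurableSet_Ioc ?_
          intro t ht
          have : ‖fy t‖ = ‖f t‖ * ‖y t‖ := by simp [hfydef]
          rw [this, mul_comm]
          exact mul_le_mul_of_nonneg_right (hyIcc t ⟨ht.1.le, ht.2.trans hx.2⟩)
            (norm_nonneg _)
        rw [MeasureTheory.integral_const_mul] at h3
        have h4 : ∫ t in Ioc (0:ℝ) x, ‖f t‖ ≤ ∫ t in Ioc (0:ℝ) x, k t := by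
          refine setIntegral_mono_on hfx (hkx hx) measurableSet_Ioc ?_
          intro t _
          simp only [hkdef]; linarith
        have h5 := hKx hx
        have h6 : My * (∫ t in Ioc (0:ℝ) x, ‖f t‖) ≤ My * K :=
          mul_le_mul_of_nonneg_left (h4.trans h5) hMynn
        linarith
      linarith
    · rw [junkY' x hx hxC]
      exact le_add_of_nonneg_right (mul_nonneg hMynn hKnn)
  -- measurability of y' on Ioc 0 1 via the structure of C
  set Ψ : ℝ → ℂ := fun x => ∫ t in Ioc (0:ℝ) x, fy t with hΨdef
  have hCconn : Set.OrdConnected C := by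
    constructor
    intro p hp z hz w hw
    exact hCdc hz ⟨le_trans hp.1.1 hw.1, hw.2⟩
  have hCmeas : MeasurableSet C := hCconn.measurableSet
  have hΨC : ContinuousOn Ψ C := by
    intro x hxC
    by_cases hmax : ∃ z ∈ C, x < z
    · obtain ⟨z, hzC, hxz⟩ := hmax
      have hcont : ContinuousOn Ψ (Icc (0:ℝ) z) :=
        intervalIntegral.continuousOn_primitive
          ((integrableOn_Icc_iff_integrableOn_Ioc).mpr hzC.2)
      have h1 : ContinuousWithinAt Ψ (Icc (0:ℝ) z) x := hcont x ⟨hxC.1.1, hxz.le⟩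
      refine h1.mono_of_mem_nhdsWithin ?_
      have h2 : C ∩ Iio z ∈ nhdsWithin x C :=
        Filter.inter_mem self_mem_nhdsWithin
          (mem_nhdsWithin_of_mem_nhds (Iio_mem_nhds hxz))
      refine Filter.mem_of_superset h2 ?_
      rintro w ⟨hwC, hwz⟩
      exact ⟨hwC.1.1, hwz.le⟩
    · push_neg at hmax
      have hsub : C ⊆ Icc (0:ℝ) x := fun z hz => ⟨hz.1.1, hmax z hz⟩
      have hcont : ContinuousOn Ψ (Icc (0:ℝ) x) :=
        intervalIntegral.continuousOn_primitive
          ((integrableOn_Icc_iff_integrableOn_Ioc).mpr hxC.2)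
      exact (hcont.mono hsub) x hxC
  have hΨasm : AEStronglyMeasurable Ψ (volume.restrict (Ioc (0:ℝ) 1)) := by
    have hind : ∀ x ∈ Ioc (0:ℝ) 1, Ψ x = C.indicator Ψ x := by
      intro x hx
      by_cases hxC : x ∈ C
      · rw [Set.indicator_of_mem hxC]
      · rw [Set.indicator_of_notMem hxC]
        exact MeasureTheory.integral_undef fun h => hxC ⟨⟨hx.1.le, hx.2⟩, h⟩
    have hmain : AEStronglyMeasurable (C.indicator Ψ) (volume.restrict (Ioc (0:ℝ) 1)) := by
      have hle : volume.restrict (Ioc (0:ℝ) 1)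
          ≤ volume.restrict (Ioc (0:ℝ) 1 ∩ C) + volume.restrict (Ioc (0:ℝ) 1 \ C) := by
        calc volume.restrict (Ioc (0:ℝ) 1)
            = volume.restrict ((Ioc (0:ℝ) 1 ∩ C) ∪ (Ioc (0:ℝ) 1 \ C)) := by
              rw [Set.inter_union_diff]
          _ ≤ _ := Measure.restrict_union_le _ _
      refine AEStronglyMeasurable.mono_measure ?_ hle
      refine AEStronglyMeasurable.add_measure ?_ ?_
      · refine AEStronglyMeasurable.mono_measure ?_
          (Measure.restrict_mono Set.inter_subset_right le_rfl)
        refine ((hΨC.aestronglyMeasurable hCmeas).congr ?_)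
        exact (ae_restrict_iff' hCmeas).mpr
          (Filter.Eventually.of_forall fun x hx => (Set.indicator_of_mem hx Ψ).symm)
      · refine ((aestronglyMeasurable_const (b := (0:ℂ))).congr ?_)
        refine (ae_restrict_iff' (measurableSet_Ioc.diff hCmeas)).mpr
          (Filter.Eventually.of_forall fun x hx => ?_)
        exact (Set.indicator_of_notMem hx.2 Ψ).symm
    refine hmain.congr ?_
    exact (ae_restrict_iff' measurableSet_Ioc).mpr
      (Filter.Eventually.of_forall fun x hx => (hind x hx).symm)
  have hy'asm : AEStronglyMeasurable y' (volume.restrict (Ioc (0:ℝ) 1)) := by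
    refine ((aestronglyMeasurable_const (b := y' 0)).add hΨasm).congr ?_
    refine (ae_restrict_iff' measurableSet_Ioc).mpr
      (Filter.Eventually.of_forall fun x hx => ?_)
    exact (E2 x ⟨hx.1.le, hx.2⟩).symm
  have hy'int : IntegrableOn y' (Ioc (0:ℝ) 1) := by
    refine Integrable.mono' (g := fun _ => v0 + My * K)
      (integrableOn_const measure_Ioc_lt_top.ne) hy'asm ?_
    exact (ae_restrict_iff' measurableSet_Ioc).mpr
      (Filter.Eventually.of_forall fun x hx => hy'Icc x ⟨hx.1.le, hx.2⟩)
  -- y is continuous on Icc 0 1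
  have hyCont : ContinuousOn y (Icc (0:ℝ) 1) := by
    have hprim : ContinuousOn (fun x => y 0 + ∫ t in Ioc (0:ℝ) x, y' t) (Icc (0:ℝ) 1) :=
      continuousOn_const.add (intervalIntegral.continuousOn_primitive
        ((integrableOn_Icc_iff_integrableOn_Ioc).mpr hy'int))
    exact hprim.congr fun x hx => E1 x hx
  -- f*y is integrable on Ioc 0 1
  have hyasm : AEStronglyMeasurable y (volume.restrict (Ioc (0:ℝ) 1)) :=
    (hyCont.mono Ioc_subset_Icc_self).aestronglyMeasurable measurableSet_Ioc
  have hfyint : IntegrableOn fy (Ioc (0:ℝ) 1) := by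
    have h0 : Integrable (fun t => y t * f t) (volume.restrict (Ioc (0:ℝ) 1)) := by
      refine Integrable.bdd_mul (c := My) hf hyasm ?_
      exact (ae_restrict_iff' measurableSet_Ioc).mpr
        (Filter.Eventually.of_forall fun x hx => hyIcc x ⟨hx.1.le, hx.2⟩)
    exact h0.congr (Filter.Eventually.of_forall fun t => by simp [hfydef, mul_comm])
  -- y' is continuous on Icc 0 1
  have hy'Cont : ContinuousOn y' (Icc (0:ℝ) 1) := by
    have hprim : ContinuousOn (fun x => y' 0 + ∫ t in Ioc (0:ℝ) x, fy t) (Icc (0:ℝ) 1) :=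
      continuousOn_const.add (intervalIntegral.continuousOn_primitive
        ((integrableOn_Icc_iff_integrableOn_Ioc).mpr hfyint))
    exact hprim.congr fun x hx => E2 x hx
  exact ⟨hy'int, hfyint, hyCont, hy'Cont⟩


/-- if `λ ∈ ℝ` satisfies `Δ(λ) = 0`, then
`Δ₀(λ) = −(5 + ϑ(1,λ)²)/4`; in particular `Δ₀(λ)` is real and `Δ₀(λ) ≤ −5/4`. -/
theorem lyapunov_at_zero_of_discriminant
    (q : ℝ → ℝ) (hq : MemLp q 2 (volume.restrict (Set.Icc (0:ℝ) 1)))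
    (lam : ℝ) (th th' ph ph' : ℝ → ℂ)
    (hth : IsSol q (lam : ℂ) th th') (hth0 : th 0 = 1) (hth'0 : th' 0 = 0)
    (hph : IsSol q (lam : ℂ) ph ph') (hph0 : ph 0 = 0) (hph'0 : ph' 0 = 1)
    -- for real `λ` the fundamental solutions are real-valued on `[0,1]`:
    (hreal : ∀ x ∈ Set.Icc (0:ℝ) 1,
      (th x).im = 0 ∧ (th' x).im = 0 ∧ (ph x).im = 0 ∧ (ph' x).im = 0)
    (hDelta : (ph' 1 + th 1) / 2 = 0) :
    2 * ((ph' 1 + th 1) / 2) ^ 2 + th' 1 * ph 1 / 4 - 1 = -(5 + th 1 ^ 2) / 4 ∧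
    (2 * ((ph' 1 + th 1) / 2) ^ 2 + th' 1 * ph 1 / 4 - 1).im = 0 ∧
    (2 * ((ph' 1 + th 1) / 2) ^ 2 + th' 1 * ph 1 / 4 - 1).re ≤ -(5 / 4) := by
  have hfin : IsFiniteMeasure (volume.restrict (Set.Icc (0:ℝ) 1)) := by
    constructor
    rw [Measure.restrict_apply_univ]
    exact measure_Icc_lt_top
  have hqint : Integrable q (volume.restrict (Set.Icc (0:ℝ) 1)) :=
    hq.integrable one_le_two
  have hf : IntegrableOn (fun t => (q t : ℂ) - (lam : ℂ)) (Set.Ioc (0:ℝ) 1) := by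
    have h1 : IntegrableOn (fun t => ((q t : ℂ))) (Set.Icc (0:ℝ) 1) := hqint.ofReal
    have h2 : IntegrableOn (fun t => (q t : ℂ) - (lam : ℂ)) (Set.Icc (0:ℝ) 1) :=
      h1.sub (integrableOn_const measure_Icc_lt_top.ne)
    exact h2.mono_set Set.Ioc_subset_Icc_self
  obtain ⟨e1t, e2t⟩ := hth
  obtain ⟨e1p, e2p⟩ := hph
  have E1t : ∀ x ∈ Set.Icc (0:ℝ) 1, th x = th 0 + ∫ t in Set.Ioc (0:ℝ) x, th' t :=
    fun x hx => by rw [e1t x hx, intervalIntegral.integral_of_le hx.1]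
  have E2t : ∀ x ∈ Set.Icc (0:ℝ) 1,
      th' x = th' 0 + ∫ t in Set.Ioc (0:ℝ) x, ((q t : ℂ) - (lam : ℂ)) * th t :=
    fun x hx => by rw [e2t x hx, intervalIntegral.integral_of_le hx.1]
  have E1p : ∀ x ∈ Set.Icc (0:ℝ) 1, ph x = ph 0 + ∫ t in Set.Ioc (0:ℝ) x, ph' t :=
    fun x hx => by rw [e1p x hx, intervalIntegral.integral_of_le hx.1]
  have E2p : ∀ x ∈ Set.Icc (0:ℝ) 1,
      ph' x = ph' 0 + ∫ t in Set.Ioc (0:ℝ) x, ((q t : ℂ) - (lam : ℂ)) * ph t :=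
    fun x hx => by rw [e2p x hx, intervalIntegral.integral_of_le hx.1]
  obtain ⟨ith', ifth, cth, cth'⟩ :=
    solution_regularity (fun t => (q t : ℂ) - (lam : ℂ)) th th' hf E1t E2t
  obtain ⟨iph', ifph, cph, cph'⟩ :=
    solution_regularity (fun t => (q t : ℂ) - (lam : ℂ)) ph ph' hf E1p E2p
  have hW := wronskian_const (fun t => (q t : ℂ) - (lam : ℂ)) th th' ph ph'
    ith' iph' ifth ifph cth cth' cph cph' E1t E2t E1p E2p
  rw [hth0, hth'0, hph0, hph'0] at hW
  have hW1 : th 1 * ph' 1 - th' 1 * ph 1 = 1 := by rw [hW]; ring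
  have hsum : ph' 1 = -th 1 := by linear_combination 2 * hDelta
  have hprod : th' 1 * ph 1 = -1 - th 1 ^ 2 := by
    linear_combination -hW1 + th 1 * hsum
  have g1 : 2 * ((ph' 1 + th 1) / 2) ^ 2 + th' 1 * ph 1 / 4 - 1 = -(5 + th 1 ^ 2) / 4 := by
    rw [hDelta]
    linear_combination hprod / 4
  have him : (th 1).im = 0 := (hreal 1 ⟨zero_le_one, le_refl 1⟩).1
  have hre : th 1 = ((th 1).re : ℂ) := Complex.ext rfl (by simp [him])
  have hcast : (-(5 + ((th 1).re : ℂ) ^ 2) / 4) = ((-(5 + (th 1).re ^ 2) / 4 : ℝ) : ℂ) := by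
    push_cast; ring
  refine ⟨g1, ?_, ?_⟩
  · rw [g1, hre, hcast, Complex.ofReal_im]
  · rw [g1, hre, hcast, Complex.ofReal_re]
    nlinarith [sq_nonneg (th 1).re]

end
end

section
/- Let N = 2m+1 ≥ 3 be an odd integer, k an integer, s = e^{2πi/N}, c_k = cos(πk/N), s_k = sin(πk/N), and let λ ∈ ℂ with φ(1,λ) ≠ 0. Define the 2×2 matrices M(λ) = [[ϑ(1,λ), φ(1,λ)], [ϑ′(1,λ), φ′(1,λ)]] (the Hill monodromy matrix), A_k(λ) = (1/(1+s^k))·[[2·Δ(λ), φ(1,λ)], [4·(Δ(λ)² − c_k²)/φ(1,λ), 2·Δ(λ)]], and the zigzag monodromy matrix M_k(λ) = A_k(λ)·M(λ). Then det M_k(λ) = s^{−k} and trace M_k(λ) = 4·(Δ₀(λ) + s_k²)/(1 + s^k) = 2·(Δ₀(λ) + s_k²)/(s^{k/2}·c_k), where s^{k/2} = e^{πik/N}. -/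
open MeasureTheory Set

noncomputable section

lemma qc_int {q : ℝ → ℝ} (hq : MemLp q 2 (volume.restrict (Set.Icc (0:ℝ) 1))) (lam : ℂ) :
    IntegrableOn (fun t => ((q t : ℂ) - lam)) (Icc (0:ℝ) 1) := by
  haveI : IsFiniteMeasure (volume.restrict (Icc (0:ℝ) 1)) :=
    ⟨by rw [Measure.restrict_apply_univ]; exact isCompact_Icc.measure_lt_top⟩
  have h1 : MemLp q 1 (volume.restrict (Icc (0:ℝ) 1)) :=
    hq.mono_exponent (by norm_num)
  have h2 : Integrable q (volume.restrict (Icc (0:ℝ) 1)) := memLp_one_iff_integrable.mp h1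
  exact (h2.ofReal (𝕜 := ℂ)).sub (integrable_const lam)

theorem IsSol.reg {q : ℝ → ℝ} {lam : ℂ} {y y' : ℝ → ℂ}
    (hq : IntegrableOn (fun t => ((q t : ℂ) - lam)) (Icc (0:ℝ) 1))
    (h : IsSol q lam y y') :
    ContinuousOn y (Icc 0 1) ∧ ContinuousOn y' (Icc 0 1) ∧
    IntegrableOn y' (Ioc 0 1) ∧
    IntegrableOn (fun t => ((q t : ℂ) - lam) * y t) (Ioc 0 1) ∧
    (∀ x ∈ Icc (0:ℝ) 1, y x = y 0 + ∫ t in Ioc (0:ℝ) x, y' t) ∧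
    (∀ x ∈ Icc (0:ℝ) 1, y' x = y' 0 + ∫ t in Ioc (0:ℝ) x, ((q t : ℂ) - lam) * y t) := by
  set qc : ℝ → ℂ := fun t => ((q t : ℂ) - lam) with hqc
  set g : ℝ → ℂ := fun t => qc t * y t with hg
  have h₁ : ∀ x ∈ Icc (0:ℝ) 1, y x = y 0 + ∫ t in Ioc (0:ℝ) x, y' t := by
    intro x hx
    rw [h.1 x hx, intervalIntegral.integral_of_le hx.1]
  have h₂ : ∀ x ∈ Icc (0:ℝ) 1, y' x = y' 0 + ∫ t in Ioc (0:ℝ) x, g t := by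
    intro x hx
    rw [h.2 x hx, intervalIntegral.integral_of_le hx.1]
  -- step A
  have stepA : ∀ c ∈ Icc (0:ℝ) 1, IntegrableOn y' (Ioc 0 c) → ContinuousOn y (Icc 0 c) := by
    intro c hc hi
    have hIcc : IntegrableOn y' (Icc 0 c) := by
      rwa [integrableOn_Icc_iff_integrableOn_Ioc]
    have hcont := intervalIntegral.continuousOn_primitive (μ := volume) (f := y') (a := 0) (b := c) hIcc
    exact (continuousOn_const.add hcont).congr
      (fun x hx => h₁ x ⟨hx.1, hx.2.trans hc.2⟩)
  -- step C
  have stepC : ∀ c ∈ Icc (0:ℝ) 1, IntegrableOn g (Ioc 0 c) → ContinuousOn y' (Icc 0 c) := by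
    intro c hc hi
    have hIcc : IntegrableOn g (Icc 0 c) := by
      rwa [integrableOn_Icc_iff_integrableOn_Ioc]
    have hcont := intervalIntegral.continuousOn_primitive (μ := volume) (f := g) (a := 0) (b := c) hIcc
    exact (continuousOn_const.add hcont).congr
      (fun x hx => h₂ x ⟨hx.1, hx.2.trans hc.2⟩)
  -- step B
  have stepB : ∀ c ∈ Icc (0:ℝ) 1, ContinuousOn y (Icc 0 c) → IntegrableOn g (Ioc 0 c) := by
    intro c hc hy
    obtain ⟨C, hC⟩ := isCompact_Icc.exists_bound_of_continuousOn hy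
    have hqc' : IntegrableOn qc (Ioc 0 c) :=
      hq.mono_set ((Ioc_subset_Icc_self).trans (Icc_subset_Icc le_rfl hc.2))
    have hym : AEStronglyMeasurable y (volume.restrict (Ioc 0 c)) := by
      have := hy.aestronglyMeasurable (μ := volume) measurableSet_Icc
      exact this.mono_measure (Measure.restrict_mono Ioc_subset_Icc_self le_rfl)
    refine Integrable.mono' (hqc'.norm.mul_const C) (hqc'.aestronglyMeasurable.mul hym) ?_
    rw [ae_restrict_iff' measurableSet_Ioc]
    refine Filter.Eventually.of_forall (fun t ht => ?_)
    have hyt : ‖y t‖ ≤ C := hC t ⟨ht.1.le, ht.2⟩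
    calc ‖qc t * y t‖ = ‖qc t‖ * ‖y t‖ := norm_mul _ _
      _ ≤ ‖qc t‖ * C := by
          exact mul_le_mul_of_nonneg_left hyt (norm_nonneg _)
  have stepD : ∀ c ∈ Icc (0:ℝ) 1, IntegrableOn y' (Ioc 0 c) → IntegrableOn g (Ioc 0 c) :=
    fun c hc hi => stepB c hc (stepA c hc hi)

  -- the set of good endpoints
  set S : Set ℝ := {x | x ∈ Icc (0:ℝ) 1 ∧ IntegrableOn y' (Ioc 0 x) volume} with hS
  have hS0 : (0:ℝ) ∈ S := ⟨⟨le_refl 0, zero_le_one⟩, by simp [IntegrableOn]⟩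
  have hSne : S.Nonempty := ⟨0, hS0⟩
  have hSb : BddAbove S := ⟨1, fun x hx => hx.1.2⟩
  set b : ℝ := sSup S with hbdef
  have hb0 : 0 ≤ b := le_csSup hSb hS0
  have hb1 : b ≤ 1 := csSup_le hSne (fun x hx => hx.1.2)
  have hbI : b ∈ Icc (0:ℝ) 1 := ⟨hb0, hb1⟩
  have hlt : ∀ x ∈ Ico (0:ℝ) b, IntegrableOn y' (Ioc 0 x) ∧ x ∈ Icc (0:ℝ) 1 := by
    intro x hx
    obtain ⟨z, hz, hxz⟩ := exists_lt_of_lt_csSup hSne hx.2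
    exact ⟨hz.2.mono_set (Ioc_subset_Ioc_right hxz.le), ⟨hx.1, (hx.2.trans_le hb1).le⟩⟩
  have hyc : ∀ x ∈ Ico (0:ℝ) b, ContinuousOn y (Icc 0 x) ∧ ContinuousOn y' (Icc 0 x) := by
    intro x hx
    obtain ⟨hi, hxI⟩ := hlt x hx
    exact ⟨stepA x hxI hi, stepC x hxI (stepD x hxI hi)⟩
  -- b is itself good
  have hbS : IntegrableOn y' (Ioc 0 b) := by
    rcases eq_or_lt_of_le hb0 with hb | hb
    · simp [← hb, IntegrableOn]
    -- find a < b with small mass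
    set w : ℝ → ℝ := fun t => 1 + ‖qc t‖ with hw
    have hwint : IntegrableOn w (Icc (0:ℝ) 1) := by
      refine Integrable.add ?_ hq.norm
      exact integrableOn_const isCompact_Icc.measure_lt_top.ne
    have hwnn : ∀ t, 0 ≤ w t := fun t => by positivity
    have hPhi := intervalIntegral.continuousOn_primitive (μ := volume) (f := w) (a := 0) (b := 1) hwint
    have hPhib : ContinuousWithinAt (fun x => ∫ t in Ioc (0:ℝ) x, w t) (Icc (0:ℝ) 1) b :=
      hPhi b hbI
    rw [Metric.continuousWithinAt_iff] at hPhib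
    obtain ⟨δ, hδ, hδ'⟩ := hPhib (1/2) (by norm_num)
    set a : ℝ := max (b - δ/2) (b/2) with hadef
    have hab : a < b := by
      apply max_lt <;> [linarith; linarith]
    have ha0 : 0 ≤ a := le_max_of_le_right (by linarith)
    have haI : a ∈ Icc (0:ℝ) 1 := ⟨ha0, (hab.trans_le hb1).le⟩
    have haIco : a ∈ Ico (0:ℝ) b := ⟨ha0, hab⟩
    have hsplitw : ∫ t in Ioc (0:ℝ) b, w t = (∫ t in Ioc (0:ℝ) a, w t) + ∫ t in Ioc a b, w t := by
      rw [← Ioc_union_Ioc_eq_Ioc ha0 hab.le]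
      exact setIntegral_union (Set.Ioc_disjoint_Ioc_of_le le_rfl) measurableSet_Ioc
        (hwint.mono_set (Ioc_subset_Icc_self.trans (Icc_subset_Icc le_rfl haI.2)))
        (hwint.mono_set (fun t ht => ⟨ha0.trans ht.1.le, ht.2.trans hb1⟩))
    have hsmall : ∫ t in Ioc a b, w t ≤ 1/2 := by
      have hdist : dist a b < δ := by
        rw [Real.dist_eq, abs_of_nonpos (by linarith)]
        have : b - δ/2 ≤ a := le_max_left _ _
        linarith
      have := hδ' haI hdist
      rw [Real.dist_eq] at this
      have h2 : ∫ t in Ioc a b, w t = (∫ t in Ioc (0:ℝ) b, w t) - ∫ t in Ioc (0:ℝ) a, w t := by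
        rw [hsplitw]; ring
      calc ∫ t in Ioc a b, w t = (∫ t in Ioc (0:ℝ) b, w t) - ∫ t in Ioc (0:ℝ) a, w t := h2
        _ ≤ |(∫ t in Ioc (0:ℝ) a, w t) - ∫ t in Ioc (0:ℝ) b, w t| := by
            rw [abs_sub_comm]; exact le_abs_self _
        _ ≤ 1/2 := (this).le
    -- the doubling bound
    set u : ℝ → ℝ := fun t => ‖y t‖ + ‖y' t‖ with hu
    clear_value u
    have hunn : ∀ t, 0 ≤ u t := fun t => by rw [hu]; positivity
    have key : ∀ x ∈ Ico a b, ∀ t ∈ Icc a x, u t ≤ 2 * u a := by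
      intro x hx
      have hxIco : x ∈ Ico (0:ℝ) b := ⟨ha0.trans hx.1, hx.2⟩
      obtain ⟨hycx, hy'cx⟩ := hyc x hxIco
      have hucont : ContinuousOn u (Icc a x) := by
        have hsub : Icc a x ⊆ Icc (0:ℝ) x := Icc_subset_Icc ha0 le_rfl
        rw [hu]
        exact ((hycx.mono hsub).norm.add (hy'cx.mono hsub).norm)
      obtain ⟨tm, htm, htmax⟩ := isCompact_Icc.exists_isMaxOn ⟨a, left_mem_Icc.mpr hx.1⟩ hucont
      have hmax : ∀ t ∈ Icc a x, u t ≤ u tm := fun t ht => htmax ht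
      -- inequality chain at any t in Icc a x
      have chain : ∀ t ∈ Icc a x, u t ≤ u a + (1/2) * u tm := by
        intro t ht
        have htb : t ∈ Icc (0:ℝ) 1 := ⟨ha0.trans ht.1, ((ht.2.trans_lt hx.2).trans_le hb1).le⟩
        have htIco : t ∈ Ico (0:ℝ) b := ⟨ha0.trans ht.1, ht.2.trans_lt hx.2⟩
        obtain ⟨hity', htI⟩ := hlt t htIco
        have hitg : IntegrableOn g (Ioc 0 t) := stepD t htI hity'
        have hsplit : ∀ (f : ℝ → ℂ), IntegrableOn f (Ioc 0 t) →
            (∫ s in Ioc (0:ℝ) t, f s) = (∫ s in Ioc (0:ℝ) a, f s) + ∫ s in Ioc a t, f s := by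
          intro f hf
          rw [← Ioc_union_Ioc_eq_Ioc ha0 ht.1]
          exact setIntegral_union (Set.Ioc_disjoint_Ioc_of_le le_rfl) measurableSet_Ioc
            (hf.mono_set (Ioc_subset_Ioc_right ht.1)) (hf.mono_set (fun s hs => ⟨ha0.trans_lt hs.1, hs.2⟩))
        have E1 : y t = y a + ∫ s in Ioc a t, y' s := by
          rw [h₁ t htb, h₁ a haI, hsplit y' hity']; ring
        have E2 : y' t = y' a + ∫ s in Ioc a t, g s := by
          rw [h₂ t htb, h₂ a haI, hsplit g hitg]; ring
        have hn1 : ‖y t‖ ≤ ‖y a‖ + ∫ s in Ioc a t, ‖y' s‖ := by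
          rw [E1]
          exact (norm_add_le _ _).trans (by gcongr; exact norm_integral_le_integral_norm _)
        have hn2 : ‖y' t‖ ≤ ‖y' a‖ + ∫ s in Ioc a t, ‖g s‖ := by
          rw [E2]
          exact (norm_add_le _ _).trans (by gcongr; exact norm_integral_le_integral_norm _)
        have hint1 : IntegrableOn (fun s => ‖y' s‖) (Ioc a t) :=
          (hity'.mono_set (fun s hs => ⟨ha0.trans_lt hs.1, hs.2⟩)).norm
        have hint2 : IntegrableOn (fun s => ‖g s‖) (Ioc a t) :=
          (hitg.mono_set (fun s hs => ⟨ha0.trans_lt hs.1, hs.2⟩)).norm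
        have hintw : IntegrableOn (fun s => w s * u tm) (Ioc a t) := by
          refine Integrable.mul_const ?_ _
          exact hwint.mono_set (fun s hs => ⟨ha0.trans hs.1.le, hs.2.trans (ht.2.trans (hx.2.le.trans hb1))⟩)
        have hmono : (∫ s in Ioc a t, ‖y' s‖ + ‖g s‖) ≤ ∫ s in Ioc a t, w s * u tm := by
          refine setIntegral_mono_on (hint1.add hint2) hintw measurableSet_Ioc ?_
          intro s hs
          have hsx : s ∈ Icc a x := ⟨hs.1.le, hs.2.trans ht.2⟩
          have hus : u s ≤ u tm := hmax s hsx
          have h1 : ‖y' s‖ ≤ u s := by rw [hu]; exact le_add_of_nonneg_left (norm_nonneg _)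
          have h2 : ‖g s‖ ≤ ‖qc s‖ * u s := by
            rw [hg]
            calc ‖qc s * y s‖ = ‖qc s‖ * ‖y s‖ := norm_mul _ _
              _ ≤ ‖qc s‖ * u s := by
                  rw [hu]
                  refine mul_le_mul_of_nonneg_left ?_ (norm_nonneg _)
                  exact le_add_of_nonneg_right (norm_nonneg _)
          have hq0 : (0:ℝ) ≤ ‖qc s‖ := norm_nonneg _
          have hus0 : 0 ≤ u s := hunn s
          have hutm0 : 0 ≤ u tm := hunn tm
          calc ‖y' s‖ + ‖g s‖ ≤ u s + ‖qc s‖ * u s := add_le_add h1 h2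
            _ = (1 + ‖qc s‖) * u s := by ring
            _ ≤ (1 + ‖qc s‖) * u tm := by
                refine mul_le_mul_of_nonneg_left hus (by positivity)
            _ = w s * u tm := rfl
        have hwsub : (∫ s in Ioc a t, w s * u tm) ≤ (1/2) * u tm := by
          rw [integral_mul_const]
          have hsubset : (∫ s in Ioc a t, w s) ≤ ∫ s in Ioc a b, w s := by
            refine setIntegral_mono_set
              (hwint.mono_set (fun s hs => ⟨ha0.trans hs.1.le, hs.2.trans hb1⟩)) ?_ ?_
            · exact Filter.Eventually.of_forall (fun s => hwnn s)
            · exact HasSubset.Subset.eventuallyLE (Ioc_subset_Ioc_right (ht.2.trans hx.2.le))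
          calc (∫ s in Ioc a t, w s) * u tm ≤ (∫ s in Ioc a b, w s) * u tm :=
                mul_le_mul_of_nonneg_right hsubset (hunn tm)
            _ ≤ (1/2) * u tm := mul_le_mul_of_nonneg_right hsmall (hunn tm)
        have hsumint : (∫ s in Ioc a t, ‖y' s‖ + ‖g s‖)
            = (∫ s in Ioc a t, ‖y' s‖) + ∫ s in Ioc a t, ‖g s‖ := integral_add hint1 hint2
        calc u t = ‖y t‖ + ‖y' t‖ := by rw [hu]
          _ ≤ (‖y a‖ + ∫ s in Ioc a t, ‖y' s‖) + (‖y' a‖ + ∫ s in Ioc a t, ‖g s‖) :=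
              add_le_add hn1 hn2
          _ = u a + ((∫ s in Ioc a t, ‖y' s‖) + ∫ s in Ioc a t, ‖g s‖) := by rw [hu]; ring
          _ = u a + ∫ s in Ioc a t, ‖y' s‖ + ‖g s‖ := by rw [hsumint]
          _ ≤ u a + ∫ s in Ioc a t, w s * u tm := by linarith [hmono]
          _ ≤ u a + (1/2) * u tm := by linarith [hwsub]
      have htm2 : u tm ≤ 2 * u a := by
        have := chain tm htm
        linarith
      intro t ht
      exact (chain t ht).trans (by linarith)
    -- conclude integrability on Ioc 0 b
    have hy'Ico : ContinuousOn y' (Ico 0 b) := by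
      intro t ht
      set x : ℝ := (t + b)/2 with hx
      have htx : t < x := by rw [hx]; linarith [ht.2]
      have hxb : x < b := by rw [hx]; linarith [ht.2]
      have hxIco : x ∈ Ico (0:ℝ) b := ⟨by rw [hx]; linarith [ht.1, hb0], hxb⟩
      have hcx := (hyc x hxIco).2
      have hsubm : Iio x ∩ Ico (0:ℝ) b ⊆ Icc (0:ℝ) x := fun z hz => ⟨hz.2.1, hz.1.le⟩
      have hmem : Icc (0:ℝ) x ∈ nhdsWithin t (Ico 0 b) :=
        mem_nhdsWithin.mpr ⟨Iio x, isOpen_Iio, htx, hsubm⟩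
      exact (hcx t ⟨ht.1, htx.le⟩).mono_of_mem_nhdsWithin hmem
    have hasm : AEStronglyMeasurable y' (volume.restrict (Ioc a b)) := by
      have h1 : AEStronglyMeasurable y' (volume.restrict (Ioo a b)) := by
        have := hy'Ico.aestronglyMeasurable (μ := volume) measurableSet_Ico
        have hsub2 : Ioo a b ⊆ Ico (0:ℝ) b := fun z hz => ⟨ha0.trans hz.1.le, hz.2⟩
        exact this.mono_measure (Measure.restrict_mono hsub2 le_rfl)
      rwa [Measure.restrict_congr_set Ioo_ae_eq_Ioc] at h1
    have hbound : ∀ᵐ t ∂(volume.restrict (Ioc a b)), ‖y' t‖ ≤ 2 * u a := by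
      rw [← Measure.restrict_congr_set Ioo_ae_eq_Ioc, ae_restrict_iff' measurableSet_Ioo]
      refine Filter.Eventually.of_forall (fun t ht => ?_)
      have := key ((t+b)/2) ⟨by linarith [ht.1], by linarith [ht.2]⟩ t ⟨ht.1.le, by linarith [ht.2]⟩
      have h0 : 0 ≤ ‖y t‖ := norm_nonneg _
      calc ‖y' t‖ ≤ u t := by rw [hu]; exact le_add_of_nonneg_left h0
        _ ≤ 2 * u a := this
    have hIab : IntegrableOn y' (Ioc a b) := by
      refine Integrable.mono' (integrableOn_const (C := 2 * u a) measure_Ioc_lt_top.ne) hasm hbound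
    have hI0a : IntegrableOn y' (Ioc 0 a) := (hlt a haIco).1
    have : IntegrableOn y' (Ioc 0 a ∪ Ioc a b) := hI0a.union hIab
    rwa [Ioc_union_Ioc_eq_Ioc ha0 hab.le] at this
  -- b = 1
  have hbeq : b = 1 := by
    by_contra hne
    have hblt : b < 1 := lt_of_le_of_ne hb1 hne
    by_cases hex : ∃ x, x ∈ Ioc b 1 ∧ IntegrableOn y' (Ioc 0 x) volume
    · obtain ⟨x, hx, hxint⟩ := hex
      have hxS : x ∈ S := ⟨⟨hb0.trans hx.1.le, hx.2⟩, hxint⟩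
      have := le_csSup hSb hxS
      exact absurd this (not_le.mpr (hx.1.trans_le le_rfl))
    · push_neg at hex
      have hconst : ∀ x ∈ Ioc b 1, y x = y 0 := by
        intro x hx
        rw [h₁ x ⟨hb0.trans hx.1.le, hx.2⟩, integral_undef (hex x hx), add_zero]
      have hycb : ContinuousOn y (Icc 0 b) := stepA b hbI hbS
      have hg0b : IntegrableOn g (Ioc 0 b) := stepB b hbI hycb
      have hgb1 : IntegrableOn g (Ioc b 1) := by
        have hconst_int : IntegrableOn (fun t => qc t * y 0) (Ioc b 1) := by
          exact (hq.mono_set (fun t ht => ⟨hb0.trans ht.1.le, ht.2⟩)).mul_const (y 0)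
        refine hconst_int.congr_fun (fun t ht => ?_) measurableSet_Ioc
        show qc t * y 0 = qc t * y t
        rw [hconst t ht]
      have hg01 : IntegrableOn g (Ioc 0 1) := by
        have := hg0b.union hgb1
        rwa [Ioc_union_Ioc_eq_Ioc hb0 hb1] at this
      have hy'c : ContinuousOn y' (Icc 0 1) := stepC 1 ⟨zero_le_one, le_refl 1⟩ hg01
      have hy'int : IntegrableOn y' (Ioc 0 1) :=
        (hy'c.integrableOn_Icc).mono_set Ioc_subset_Icc_self
      exact hex 1 ⟨hblt, le_refl 1⟩ hy'int
  rw [hbeq] at hbS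
  have hIcc1 : (1:ℝ) ∈ Icc (0:ℝ) 1 := ⟨zero_le_one, le_refl 1⟩
  have hyco : ContinuousOn y (Icc 0 1) := stepA 1 hIcc1 hbS
  have hgint : IntegrableOn g (Ioc 0 1) := stepB 1 hIcc1 hyco
  have hy'co : ContinuousOn y' (Icc 0 1) := stepC 1 hIcc1 hgint
  exact ⟨hyco, hy'co, hbS, hgint, h₁, h₂⟩


-- product of a function and an integrable function, when the first is continuous on Icc 0 1
lemma contMulInt {F G : ℝ → ℂ} (hF : ContinuousOn F (Icc (0:ℝ) 1))
    (hG : IntegrableOn G (Ioc (0:ℝ) 1)) :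
    IntegrableOn (fun t => F t * G t) (Ioc (0:ℝ) 1) := by
  obtain ⟨C, hC⟩ := isCompact_Icc.exists_bound_of_continuousOn hF
  have hasm : AEStronglyMeasurable F (volume.restrict (Ioc (0:ℝ) 1)) := by
    have := hF.aestronglyMeasurable (μ := volume) measurableSet_Icc
    exact this.mono_measure (Measure.restrict_mono Ioc_subset_Icc_self le_rfl)
  refine Integrable.mono' (hG.norm.const_mul C) (hasm.mul hG.aestronglyMeasurable) ?_
  rw [ae_restrict_iff' measurableSet_Ioc]
  refine Filter.Eventually.of_forall (fun t ht => ?_)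
  calc ‖F t * G t‖ = ‖F t‖ * ‖G t‖ := norm_mul _ _
    _ ≤ C * ‖G t‖ := mul_le_mul_of_nonneg_right (hC t ⟨ht.1.le, ht.2⟩) (norm_nonneg _)

lemma prod_primitive {f g : ℝ → ℂ} (hf : IntegrableOn f (Ioc (0:ℝ) 1))
    (hg : IntegrableOn g (Ioc (0:ℝ) 1)) :
    (∫ t in Ioc (0:ℝ) 1, f t) * (∫ t in Ioc (0:ℝ) 1, g t)
      = (∫ t in Ioc (0:ℝ) 1, f t * (∫ u in Ioc (0:ℝ) t, g u))
        + ∫ t in Ioc (0:ℝ) 1, (∫ u in Ioc (0:ℝ) t, f u) * g t := by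
  have hfIcc : IntegrableOn f (Icc (0:ℝ) 1) := by rwa [integrableOn_Icc_iff_integrableOn_Ioc]
  have hgIcc : IntegrableOn g (Icc (0:ℝ) 1) := by rwa [integrableOn_Icc_iff_integrableOn_Ioc]
  set K : ℝ → ℝ → ℂ := fun t u => if u ≤ t then f t * g u else 0 with hK
  have hSm : MeasurableSet {p : ℝ × ℝ | p.2 ≤ p.1} :=
    measurableSet_le measurable_snd measurable_fst
  have hFint : Integrable (fun p : ℝ × ℝ => f p.1 * g p.2)
      ((volume.restrict (Ioc (0:ℝ) 1)).prod (volume.restrict (Ioc (0:ℝ) 1))) :=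
    Integrable.mul_prod hf hg
  have hKind : (fun p : ℝ × ℝ => K p.1 p.2)
      = {p : ℝ × ℝ | p.2 ≤ p.1}.indicator (fun p => f p.1 * g p.2) := by
    funext p
    simp [hK, Set.indicator_apply, Set.mem_setOf_eq]
  have hKint : Integrable (fun p : ℝ × ℝ => K p.1 p.2)
      ((volume.restrict (Ioc (0:ℝ) 1)).prod (volume.restrict (Ioc (0:ℝ) 1))) := by
    rw [hKind]; exact hFint.indicator hSm
  have swap : (∫ t in Ioc (0:ℝ) 1, (∫ u in Ioc (0:ℝ) 1, K t u))
      = ∫ u in Ioc (0:ℝ) 1, ∫ t in Ioc (0:ℝ) 1, K t u :=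
    integral_integral_swap hKint
  have iter1 : (∫ t in Ioc (0:ℝ) 1, (∫ u in Ioc (0:ℝ) 1, K t u))
      = ∫ t in Ioc (0:ℝ) 1, f t * (∫ u in Ioc (0:ℝ) t, g u) := by
    refine setIntegral_congr_fun measurableSet_Ioc (fun t ht => ?_)
    have h1 : (fun u => K t u) = fun u => f t * (Iic t).indicator g u := by
      funext u
      by_cases hu : u ≤ t
      · simp [hK, hu, Set.indicator_of_mem (mem_Iic.mpr hu)]
      · have : u ∉ Iic t := by simpa using hu
        simp [hK, hu, Set.indicator_of_notMem this]
    have h2 : Iic t ∩ Ioc (0:ℝ) 1 = Ioc (0:ℝ) t := by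
      ext z
      simp only [mem_inter_iff, mem_Iic, mem_Ioc]
      exact ⟨fun h => ⟨h.2.1, h.1⟩, fun h => ⟨h.2, h.1, h.2.trans ht.2⟩⟩
    rw [h1, integral_const_mul, integral_indicator measurableSet_Iic,
      Measure.restrict_restrict measurableSet_Iic, h2]
  have iter2 : (∫ u in Ioc (0:ℝ) 1, ∫ t in Ioc (0:ℝ) 1, K t u)
      = ∫ u in Ioc (0:ℝ) 1,
          ((∫ t in Ioc (0:ℝ) 1, f t) - ∫ t in Ioc (0:ℝ) u, f t) * g u := by
    refine setIntegral_congr_fun measurableSet_Ioc (fun u hu => ?_)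
    have h1 : (fun t => K t u) = fun t => (Ici u).indicator f t * g u := by
      funext t
      by_cases htu : u ≤ t
      · simp [hK, htu, Set.indicator_of_mem (mem_Ici.mpr htu)]
      · have : t ∉ Ici u := by simpa using htu
        simp [hK, htu, Set.indicator_of_notMem this]
    have h2 : Ici u ∩ Ioc (0:ℝ) 1 = Icc u 1 := by
      ext z
      simp only [mem_inter_iff, mem_Ici, mem_Ioc, mem_Icc]
      exact ⟨fun h => ⟨h.1, h.2.2⟩, fun h => ⟨h.1, hu.1.trans_le h.1, h.2⟩⟩
    have h3 : (∫ t in Icc u 1, f t) = ∫ t in Ioc u 1, f t := integral_Icc_eq_integral_Ioc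
    have h4 : (∫ t in Ioc (0:ℝ) 1, f t) = (∫ t in Ioc (0:ℝ) u, f t) + ∫ t in Ioc u 1, f t := by
      rw [← Ioc_union_Ioc_eq_Ioc hu.1.le hu.2]
      exact setIntegral_union (Set.Ioc_disjoint_Ioc_of_le le_rfl) measurableSet_Ioc
        (hf.mono_set (Ioc_subset_Ioc_right hu.2)) (hf.mono_set (Ioc_subset_Ioc_left hu.1.le))
    rw [h1, integral_mul_const, integral_indicator measurableSet_Ici,
      Measure.restrict_restrict measurableSet_Ici, h2, h3]
    congr 1
    rw [h4]; ring
  -- the primitive of f is bounded and measurable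
  have hFcont : ContinuousOn (fun x => ∫ t in Ioc (0:ℝ) x, f t) (Icc (0:ℝ) 1) :=
    intervalIntegral.continuousOn_primitive (μ := volume) hfIcc
  have hFg : IntegrableOn (fun u => (∫ t in Ioc (0:ℝ) u, f t) * g u) (Ioc (0:ℝ) 1) :=
    contMulInt hFcont hg
  have expand : (∫ u in Ioc (0:ℝ) 1,
        ((∫ t in Ioc (0:ℝ) 1, f t) - ∫ t in Ioc (0:ℝ) u, f t) * g u)
      = (∫ t in Ioc (0:ℝ) 1, f t) * (∫ u in Ioc (0:ℝ) 1, g u)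
        - ∫ u in Ioc (0:ℝ) 1, (∫ t in Ioc (0:ℝ) u, f t) * g u := by
    have e1 : (fun u => ((∫ t in Ioc (0:ℝ) 1, f t) - ∫ t in Ioc (0:ℝ) u, f t) * g u)
        = fun u => (∫ t in Ioc (0:ℝ) 1, f t) * g u - (∫ t in Ioc (0:ℝ) u, f t) * g u := by
      funext u; ring
    rw [e1, integral_sub (hg.const_mul _) hFg, integral_const_mul]
  calc (∫ t in Ioc (0:ℝ) 1, f t) * (∫ t in Ioc (0:ℝ) 1, g t)
      = (∫ u in Ioc (0:ℝ) 1,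
          ((∫ t in Ioc (0:ℝ) 1, f t) - ∫ t in Ioc (0:ℝ) u, f t) * g u)
        + ∫ u in Ioc (0:ℝ) 1, (∫ t in Ioc (0:ℝ) u, f t) * g u := by rw [expand]; ring
    _ = (∫ t in Ioc (0:ℝ) 1, (∫ u in Ioc (0:ℝ) 1, K t u))
        + ∫ u in Ioc (0:ℝ) 1, (∫ t in Ioc (0:ℝ) u, f t) * g u := by rw [swap, iter2]
    _ = (∫ t in Ioc (0:ℝ) 1, f t * (∫ u in Ioc (0:ℝ) t, g u))
        + ∫ t in Ioc (0:ℝ) 1, (∫ u in Ioc (0:ℝ) t, f u) * g t := by rw [iter1]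

lemma wronskian_eq {q : ℝ → ℝ} {lam : ℂ} {y₁ y₁' y₂ y₂' : ℝ → ℂ}
    (hq : IntegrableOn (fun t => ((q t : ℂ) - lam)) (Icc (0:ℝ) 1))
    (h1 : IsSol q lam y₁ y₁') (h2 : IsSol q lam y₂ y₂') :
    y₁ 1 * y₂' 1 - y₂ 1 * y₁' 1 = y₁ 0 * y₂' 0 - y₂ 0 * y₁' 0 := by
  obtain ⟨hc1, hc1', hi1, hig1, he1, he1'⟩ := h1.reg hq
  obtain ⟨hc2, hc2', hi2, hig2, he2, he2'⟩ := h2.reg hq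
  have h11 : (1:ℝ) ∈ Icc (0:ℝ) 1 := ⟨zero_le_one, le_refl 1⟩
  have P12 := prod_primitive hi1 hig2
  have P21 := prod_primitive hi2 hig1
  -- rewrite the primitives
  have r1 : (∫ t in Ioc (0:ℝ) 1, y₁' t * (∫ u in Ioc (0:ℝ) t, ((q u : ℂ) - lam) * y₂ u))
      = ∫ t in Ioc (0:ℝ) 1, (y₁' t * y₂' t - y₁' t * y₂' 0) := by
    refine setIntegral_congr_fun measurableSet_Ioc (fun t ht => ?_)
    have := he2' t ⟨ht.1.le, ht.2⟩
    have h' : (∫ u in Ioc (0:ℝ) t, ((q u : ℂ) - lam) * y₂ u) = y₂' t - y₂' 0 := by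
      rw [this]; ring
    rw [h']; ring
  have r2 : (∫ t in Ioc (0:ℝ) 1, (∫ u in Ioc (0:ℝ) t, y₁' u) * (((q t : ℂ) - lam) * y₂ t))
      = ∫ t in Ioc (0:ℝ) 1, (y₁ t * (((q t : ℂ) - lam) * y₂ t)
          - y₁ 0 * (((q t : ℂ) - lam) * y₂ t)) := by
    refine setIntegral_congr_fun measurableSet_Ioc (fun t ht => ?_)
    have := he1 t ⟨ht.1.le, ht.2⟩
    have h' : (∫ u in Ioc (0:ℝ) t, y₁' u) = y₁ t - y₁ 0 := by rw [this]; ring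
    rw [h']; ring
  have r3 : (∫ t in Ioc (0:ℝ) 1, y₂' t * (∫ u in Ioc (0:ℝ) t, ((q u : ℂ) - lam) * y₁ u))
      = ∫ t in Ioc (0:ℝ) 1, (y₂' t * y₁' t - y₂' t * y₁' 0) := by
    refine setIntegral_congr_fun measurableSet_Ioc (fun t ht => ?_)
    have := he1' t ⟨ht.1.le, ht.2⟩
    have h' : (∫ u in Ioc (0:ℝ) t, ((q u : ℂ) - lam) * y₁ u) = y₁' t - y₁' 0 := by
      rw [this]; ring
    rw [h']; ring
  have r4 : (∫ t in Ioc (0:ℝ) 1, (∫ u in Ioc (0:ℝ) t, y₂' u) * (((q t : ℂ) - lam) * y₁ t))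
      = ∫ t in Ioc (0:ℝ) 1, (y₂ t * (((q t : ℂ) - lam) * y₁ t)
          - y₂ 0 * (((q t : ℂ) - lam) * y₁ t)) := by
    refine setIntegral_congr_fun measurableSet_Ioc (fun t ht => ?_)
    have := he2 t ⟨ht.1.le, ht.2⟩
    have h' : (∫ u in Ioc (0:ℝ) t, y₂' u) = y₂ t - y₂ 0 := by rw [this]; ring
    rw [h']; ring
  -- integrability facts for splitting
  have hprod12 : IntegrableOn (fun t => y₁' t * y₂' t) (Ioc (0:ℝ) 1) :=
    ((hc1'.mul hc2').integrableOn_Icc).mono_set Ioc_subset_Icc_self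
  have hprod21 : IntegrableOn (fun t => y₂' t * y₁' t) (Ioc (0:ℝ) 1) :=
    ((hc2'.mul hc1').integrableOn_Icc).mono_set Ioc_subset_Icc_self
  have hyg12 : IntegrableOn (fun t => y₁ t * (((q t : ℂ) - lam) * y₂ t)) (Ioc (0:ℝ) 1) :=
    contMulInt hc1 hig2
  have hyg21 : IntegrableOn (fun t => y₂ t * (((q t : ℂ) - lam) * y₁ t)) (Ioc (0:ℝ) 1) :=
    contMulInt hc2 hig1
  have s1 : (∫ t in Ioc (0:ℝ) 1, (y₁' t * y₂' t - y₁' t * y₂' 0))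
      = (∫ t in Ioc (0:ℝ) 1, y₁' t * y₂' t) - (∫ t in Ioc (0:ℝ) 1, y₁' t) * y₂' 0 := by
    rw [integral_sub hprod12 (hi1.mul_const _), integral_mul_const]
  have s2 : (∫ t in Ioc (0:ℝ) 1, (y₁ t * (((q t : ℂ) - lam) * y₂ t)
        - y₁ 0 * (((q t : ℂ) - lam) * y₂ t)))
      = (∫ t in Ioc (0:ℝ) 1, y₁ t * (((q t : ℂ) - lam) * y₂ t))
        - y₁ 0 * ∫ t in Ioc (0:ℝ) 1, ((q t : ℂ) - lam) * y₂ t := by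
    rw [integral_sub hyg12 (hig2.const_mul _), integral_const_mul]
  have s3 : (∫ t in Ioc (0:ℝ) 1, (y₂' t * y₁' t - y₂' t * y₁' 0))
      = (∫ t in Ioc (0:ℝ) 1, y₂' t * y₁' t) - (∫ t in Ioc (0:ℝ) 1, y₂' t) * y₁' 0 := by
    rw [integral_sub hprod21 (hi2.mul_const _), integral_mul_const]
  have s4 : (∫ t in Ioc (0:ℝ) 1, (y₂ t * (((q t : ℂ) - lam) * y₁ t)
        - y₂ 0 * (((q t : ℂ) - lam) * y₁ t)))
      = (∫ t in Ioc (0:ℝ) 1, y₂ t * (((q t : ℂ) - lam) * y₁ t))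
        - y₂ 0 * ∫ t in Ioc (0:ℝ) 1, ((q t : ℂ) - lam) * y₁ t := by
    rw [integral_sub hyg21 (hig1.const_mul _), integral_const_mul]
  have t3 : (∫ t in Ioc (0:ℝ) 1, y₁ t * (((q t : ℂ) - lam) * y₂ t))
      = ∫ t in Ioc (0:ℝ) 1, y₂ t * (((q t : ℂ) - lam) * y₁ t) :=
    integral_congr_ae (Filter.Eventually.of_forall (fun t => by ring))
  have t4 : (∫ t in Ioc (0:ℝ) 1, y₁' t * y₂' t) = ∫ t in Ioc (0:ℝ) 1, y₂' t * y₁' t :=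
    integral_congr_ae (Filter.Eventually.of_forall (fun t => by ring))
  have f1 := he1 1 h11
  have f2 := he2' 1 h11
  have f3 := he2 1 h11
  have f4 := he1' 1 h11
  rw [f1, f2, f3, f4]
  rw [r1, r2] at P12
  rw [r3, r4] at P21
  rw [s1, s2] at P12
  rw [s3, s4] at P21
  linear_combination P12 - P21 + t3 + t4

/-- the zigzag monodromy matrix `M_k(λ) = A_k(λ)·M(λ)` satisfies
`det M_k(λ) = s^{−k}` and
`trace M_k(λ) = 4·(Δ₀(λ) + s_k²)/(1 + s^k) = 2·(Δ₀(λ) + s_k²)/(s^{k/2}·c_k)`. -/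
theorem zigzag_monodromy_det_and_trace
    (q : ℝ → ℝ) (hq : MemLp q 2 (volume.restrict (Set.Icc (0:ℝ) 1)))
    (m : ℕ) (hm : 1 ≤ m) (N : ℕ) (hN : N = 2 * m + 1) (k : ℤ)
    (s : ℂ) (hs : s = Complex.exp (2 * (Real.pi : ℂ) * Complex.I / (N : ℂ)))
    (ck sk : ℝ) (hck : ck = Real.cos (Real.pi * (k : ℝ) / (N : ℝ)))
    (hsk : sk = Real.sin (Real.pi * (k : ℝ) / (N : ℝ)))
    (lam : ℂ) (th th' ph ph' : ℝ → ℂ)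
    (hth : IsSol q lam th th') (hth0 : th 0 = 1) (hth'0 : th' 0 = 0)
    (hph : IsSol q lam ph ph') (hph0 : ph 0 = 0) (hph'0 : ph' 0 = 1)
    (hph1 : ph 1 ≠ 0)
    (Dl : ℂ) (hDl : Dl = (ph' 1 + th 1) / 2)
    (D0 : ℂ) (hD0 : D0 = 2 * Dl ^ 2 + th' 1 * ph 1 / 4 - 1)
    (M A : Matrix (Fin 2) (Fin 2) ℂ)
    (hM : M = !![th 1, ph 1; th' 1, ph' 1])
    (hA : A = (1 + s ^ k)⁻¹ •
      !![2 * Dl, ph 1; 4 * (Dl ^ 2 - ((ck : ℂ)) ^ 2) / ph 1, 2 * Dl]) :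
    (A * M).det = s ^ (-k) ∧
    (A * M).trace = 4 * (D0 + ((sk : ℂ)) ^ 2) / (1 + s ^ k) ∧
    (A * M).trace = 2 * (D0 + ((sk : ℂ)) ^ 2) /
      (Complex.exp ((Real.pi : ℂ) * (k : ℂ) * Complex.I / (N : ℂ)) * ((ck : ℂ))) := by
  have hπ : (Real.pi : ℝ) ≠ 0 := Real.pi_ne_zero
  have hNR : ((N : ℝ)) ≠ 0 := by
    rw [hN]; push_cast; positivity
  have hNC : ((N : ℂ)) ≠ 0 := Nat.cast_ne_zero.mpr (by rw [hN]; omega)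
  -- ck ≠ 0
  have hck0R : ck ≠ 0 := by
    rw [hck]
    intro hc
    rw [Real.cos_eq_zero_iff] at hc
    obtain ⟨n, hn⟩ := hc
    have h2 : (2 * (k:ℝ)) * Real.pi = ((2 * n + 1) * (N:ℝ)) * Real.pi := by
      field_simp at hn
      rw [show (2 * (k:ℝ)) = (2 * n + 1) * (N:ℝ) by linarith [hn]]
    have h3 : (2 * (k:ℝ)) = (2 * n + 1) * (N:ℝ) := by
      exact mul_right_cancel₀ hπ h2
    have h4 : (2 * k) = (2 * n + 1) * (N:ℤ) := by exact_mod_cast h3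
    have h5 : (N:ℤ) = 2 * (m:ℤ) + 1 := by exact_mod_cast hN
    rw [h5] at h4
    have hodd : Odd ((2 * n + 1) * (2 * (m:ℤ) + 1)) :=
      (odd_two_mul_add_one n).mul (odd_two_mul_add_one (m:ℤ))
    rw [← h4] at hodd
    exact (Int.not_odd_iff_even.mpr ⟨k, by ring⟩) hodd
  have hckC : ((ck : ℂ)) ≠ 0 := Complex.ofReal_ne_zero.mpr hck0R
  set E : ℂ := Complex.exp ((Real.pi : ℂ) * (k : ℂ) * Complex.I / (N : ℂ)) with hE
  have hE0 : E ≠ 0 := Complex.exp_ne_zero _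
  have hskexp : s ^ k = Complex.exp ((k:ℂ) * (2 * (Real.pi : ℂ) * Complex.I / (N : ℂ))) := by
    rw [hs, ← Complex.exp_int_mul]
  have hE2 : E ^ 2 = s ^ k := by
    rw [hE, hskexp, sq, ← Complex.exp_add]
    congr 1
    field_simp
    ring
  have hkey : 1 + s ^ k = 2 * E * (ck : ℂ) := by
    have hEw : E = Complex.exp (((Real.pi * (k:ℝ) / (N:ℝ) : ℝ) : ℂ) * Complex.I) := by
      rw [hE]; congr 1; push_cast; ring
    have hsk2 : s ^ k = Complex.exp (((Real.pi * (k:ℝ) / (N:ℝ) : ℝ) : ℂ) * Complex.I) *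
        Complex.exp (((Real.pi * (k:ℝ) / (N:ℝ) : ℝ) : ℂ) * Complex.I) := by
      rw [hskexp, ← Complex.exp_add]
      congr 1
      push_cast
      field_simp
      ring
    have hinv : Complex.exp (-(((Real.pi * (k:ℝ) / (N:ℝ) : ℝ) : ℂ)) * Complex.I) *
        Complex.exp (((Real.pi * (k:ℝ) / (N:ℝ) : ℝ) : ℂ) * Complex.I) = 1 := by
      rw [← Complex.exp_add,
        show -(((Real.pi * (k:ℝ) / (N:ℝ) : ℝ):ℂ)) * Complex.I
          + ((Real.pi * (k:ℝ) / (N:ℝ) : ℝ):ℂ) * Complex.I = 0 by ring, Complex.exp_zero]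
    rw [hck, Complex.ofReal_cos, Complex.cos, hEw, hsk2]
    linear_combination -hinv
  have h1s : 1 + s ^ k ≠ 0 := by
    rw [hkey]
    exact mul_ne_zero (mul_ne_zero two_ne_zero hE0) hckC
  have hsk0 : s ^ k ≠ 0 := by
    rw [← hE2]; exact pow_ne_zero 2 hE0
  -- Wronskian
  have hqint := qc_int hq lam
  have hW : th 1 * ph' 1 - ph 1 * th' 1 = 1 := by
    have := wronskian_eq hqint hth hph
    rw [hth0, hth'0, hph0, hph'0] at this
    simpa using this
  -- trig identity
  have htrig : ((sk : ℂ)) ^ 2 = 1 - ((ck : ℂ)) ^ 2 := by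
    have h := Real.sin_sq_add_cos_sq (Real.pi * (k:ℝ) / (N:ℝ))
    rw [← hck, ← hsk] at h
    have : (sk:ℝ)^2 = 1 - ck^2 := by linarith
    exact_mod_cast this
  -- compute the product matrix
  have hsq : (1 + s ^ k) ^ 2 = 4 * ((ck : ℂ)) ^ 2 * s ^ k := by
    rw [hkey, ← hE2]; ring
  subst hA hM
  constructor
  · rw [Matrix.det_mul, Matrix.det_smul, Matrix.det_fin_two_of, Matrix.det_fin_two_of,
      hW, zpow_neg, mul_one]
    simp only [Fintype.card_fin]
    have hBdet : 2 * Dl * (2 * Dl) - ph 1 * (4 * (Dl ^ 2 - ((ck:ℂ)) ^ 2) / ph 1)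
        = 4 * ((ck:ℂ)) ^ 2 := by
      field_simp
      ring
    rw [hBdet, inv_pow]
    rw [inv_mul_eq_iff_eq_mul₀ (pow_ne_zero 2 h1s)]
    field_simp
    linear_combination -hsq
  · have htr : (((1 + s ^ k)⁻¹ •
        !![2 * Dl, ph 1; 4 * (Dl ^ 2 - ((ck : ℂ)) ^ 2) / ph 1, 2 * Dl]) *
        !![th 1, ph 1; th' 1, ph' 1]).trace
        = (1 + s ^ k)⁻¹ * ((2 * Dl * th 1 + ph 1 * th' 1) +
            ((4 * (Dl ^ 2 - ((ck : ℂ)) ^ 2) / ph 1) * ph 1 + 2 * Dl * ph' 1)) := by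
      rw [Matrix.smul_mul, Matrix.trace_smul, Matrix.mul_fin_two, Matrix.trace_fin_two_of]
      rw [smul_eq_mul]
    constructor
    · rw [htr, hD0, hDl, htrig]
      field_simp
      ring
    · rw [htr, hD0, hDl, htrig, hkey]
      field_simp
      try ring

end
end
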